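/- arXiv:1212.4712 — 10 statements merged into one kernel-verified Lean document; each statement's English description precedes it below -/
import Mathlib

section
/- Let 0 < s < 1 and let β : ℝ → ℝ be a measurable function such that for some constant c > 0 one has c·|θ|^(−1−2s) ≤ β(θ) ≤ c⁻¹·|θ|^(−1−2s) for all θ ∈ [−π/4, π/4] \ {0}. For each integer n ≥ 1 set λ_{2n} = ∫_{−π/4}^{π/4} β(θ)·(1 − (cos θ)^{2n} − (sin θ)^{2n}) dθ (the integral converges absolutely since the integrand is O(|θ|^{1−2s}) near θ = 0). Then for all integers j, k ≥ 2 one has the strict subadditivity λ_{2(j+k)} < λ_{2j} + λ_{2k}. -/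
open Real MeasureTheory

/-!
Write `a = cos² θ`, `b = sin² θ`, so that `a + b = 1` and the integrand of `λ_{2n}` is
`β θ (1 - aⁿ - bⁿ)`. The subadditivity defect is
`(1 - aʲ - bʲ) + (1 - aᵏ - bᵏ) - (1 - aʲ⁺ᵏ - bʲ⁺ᵏ) = (1 - aʲ)(1 - aᵏ) - bʲ - bᵏ + bʲ⁺ᵏ`,
and for `j, k ≥ 2` and `0 < b ≤ a` the product `(1 - aʲ)(1 - aᵏ) ≥ (1 - a²)² ≥ (3b/2)²` beats
`bʲ + bᵏ ≤ 2b²`. Since `β > 0` away from `θ = 0`, the integrated defect is positive.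
All integrals converge because `|1 - aⁿ - bⁿ| ≤ n b ≤ n θ²` while `β = O(|θ|^(-1-2s))` with `s < 1`.
-/

lemma abs_one_sub_pow_sub_pow_le {a b : ℝ} (ha : 0 ≤ a) (hb : 0 ≤ b) (hab : a + b = 1)
    {n : ℕ} (hn : n ≠ 0) : |1 - a ^ n - b ^ n| ≤ n * b := by
  have ha_pow : a ^ n ≤ a := pow_le_of_le_one ha (by linarith) hn
  have hb_pow : b ^ n ≤ b := pow_le_of_le_one hb (by linarith) hn
  have bernoulli : 1 + n * (a - 1) ≤ a ^ n := by
    simpa using one_add_mul_le_pow (by linarith : -2 ≤ a - 1) n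
  rw [abs_of_nonneg (by linarith)]
  nlinarith [pow_nonneg hb n]

lemma one_sub_pow_sub_pow_add_lt {a b : ℝ} (ha : 0 < a) (hb : 0 < b) (hab : a + b = 1)
    {j k : ℕ} (hj : 2 ≤ j) (hk : 2 ≤ k) :
    1 - a ^ (j + k) - b ^ (j + k) < (1 - a ^ j - b ^ j) + (1 - a ^ k - b ^ k) := by
  wlog hba : b ≤ a generalizing a b
  · simpa only [add_comm, sub_right_comm] using this hb ha (by linarith) (by linarith)
  have hj_a : 3 / 2 * b ≤ 1 - a ^ j := by
    nlinarith [pow_le_pow_of_le_one ha.le (by linarith : a ≤ 1) hj]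
  have hk_a : 3 / 2 * b ≤ 1 - a ^ k := by
    nlinarith [pow_le_pow_of_le_one ha.le (by linarith : a ≤ 1) hk]
  have hj_b : b ^ j ≤ b ^ 2 := pow_le_pow_of_le_one hb.le (by linarith) hj
  have hk_b : b ^ k ≤ b ^ 2 := pow_le_pow_of_le_one hb.le (by linarith) hk
  have key : (3 / 2 * b) * (3 / 2 * b) ≤ (1 - a ^ j) * (1 - a ^ k) :=
    mul_le_mul hj_a hk_a (by positivity) (by linarith)
  rw [pow_add, pow_add]
  nlinarith [mul_nonneg (pow_nonneg hb.le j) (pow_nonneg hb.le k)]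

lemma abs_one_sub_cos_pow_sub_sin_pow_le (θ : ℝ) {n : ℕ} (hn : n ≠ 0) :
    |1 - cos θ ^ (2 * n) - sin θ ^ (2 * n)| ≤ n * θ ^ 2 := by
  rw [pow_mul, pow_mul]
  calc _ ≤ n * sin θ ^ 2 :=
        abs_one_sub_pow_sub_pow_le (sq_nonneg _) (sq_nonneg _) (cos_sq_add_sin_sq θ) hn
    _ ≤ n * θ ^ 2 := mul_le_mul_of_nonneg_left sin_sq_le_sq n.cast_nonneg

lemma one_sub_cos_pow_sub_sin_pow_add_lt {θ : ℝ} (h0 : θ ≠ 0)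
    (hθ : θ ∈ Set.Ioo (-(π / 2)) (π / 2)) {j k : ℕ} (hj : 2 ≤ j) (hk : 2 ≤ k) :
    1 - cos θ ^ (2 * (j + k)) - sin θ ^ (2 * (j + k)) <
      (1 - cos θ ^ (2 * j) - sin θ ^ (2 * j)) + (1 - cos θ ^ (2 * k) - sin θ ^ (2 * k)) := by
  have hsin : sin θ ≠ 0 := by
    rw [Ne, sin_eq_zero_iff_of_lt_of_lt (by linarith [hθ.1, pi_pos]) (by linarith [hθ.2, pi_pos])]
    exact h0
  simp only [pow_mul]
  exact one_sub_pow_sub_pow_add_lt (pow_pos (cos_pos_of_mem_Ioo hθ) 2) (by positivity)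
    (cos_sq_add_sin_sq θ) hj hk

lemma intervalIntegrable_abs_rpow {r : ℝ} (hr : -1 < r) (a b : ℝ) :
    IntervalIntegrable (fun x : ℝ => |x| ^ r) volume a b := by
  have from_zero_of_nonneg : ∀ d : ℝ, 0 ≤ d →
      IntervalIntegrable (fun x : ℝ => |x| ^ r) volume 0 d := by
    intro d hd
    have h := intervalIntegral.intervalIntegrable_rpow' (a := 0) (b := d) hr
    rw [intervalIntegrable_iff, Set.uIoc_of_le hd] at h ⊢
    exact h.congr_fun (fun x hx => by rw [abs_of_pos hx.1]) measurableSet_Ioc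
  have from_zero : ∀ d : ℝ, IntervalIntegrable (fun x : ℝ => |x| ^ r) volume 0 d := by
    intro d
    rcases le_or_gt 0 d with hd | hd
    · exact from_zero_of_nonneg d hd
    · simpa using (IntervalIntegrable.iff_comp_neg (by simp)).mp
        (from_zero_of_nonneg (-d) (by linarith))
  exact (from_zero a).symm.trans (from_zero b)

lemma intervalIntegrable_mul_of_abs_le_rpow {β g : ℝ → ℝ} {a b r C D : ℝ}
    (hβ : Measurable β) (hg : Measurable g) (hr : -3 < r)
    (hβ_le : ∀ θ ∈ Set.uIcc a b, θ ≠ 0 → |β θ| ≤ C * |θ| ^ r) (hg_le : ∀ θ, |g θ| ≤ D * θ ^ 2) :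
    IntervalIntegrable (fun θ => β θ * g θ) volume a b := by
  refine ((intervalIntegrable_abs_rpow (r := r + 2) (by linarith) a b).const_mul (C * D)).mono_fun'
    (hβ.mul hg).aestronglyMeasurable ?_
  filter_upwards [ae_restrict_mem measurableSet_uIoc, ae_restrict_of_ae (Measure.ae_ne volume 0)]
    with θ hθ h0
  have hβθ := hβ_le θ (Set.uIoc_subset_uIcc hθ) h0
  have hgθ : |g θ| ≤ D * |θ| ^ (2 : ℝ) := by simpa [rpow_two, sq_abs] using hg_le θ
  calc ‖β θ * g θ‖ = |β θ| * |g θ| := by rw [Real.norm_eq_abs, abs_mul]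
    _ ≤ (C * |θ| ^ r) * (D * |θ| ^ (2 : ℝ)) :=
      mul_le_mul hβθ hgθ (abs_nonneg _) ((abs_nonneg _).trans hβθ)
    _ = C * D * |θ| ^ (r + 2) := by rw [rpow_add (abs_pos.2 h0)]; ring

lemma intervalIntegral_pos_of_ae_pos_on {f : ℝ → ℝ} {a b : ℝ}
    (hfi : IntervalIntegrable f volume a b) (hpos : ∀ᵐ x, x ∈ Set.Ioo a b → 0 < f x)
    (hab : a < b) : 0 < ∫ x in a..b, f x := by
  have h₀ : 0 ≤ᵐ[volume.restrict (Set.uIoc a b)] f := by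
    rw [Filter.EventuallyLE, Set.uIoc_of_le hab.le]
    refine ae_restrict_of_ae_eq_of_ae_restrict Ioo_ae_eq_Ioc ?_
    rw [ae_restrict_iff' measurableSet_Ioo]
    filter_upwards [hpos] with x hx hx' using (hx hx').le
  rw [intervalIntegral.integral_pos_iff_support_of_nonneg_ae' h₀ hfi]
  refine ⟨hab, ((Measure.measure_Ioo_pos _).mpr hab).trans_le (measure_mono_ae ?_)⟩
  filter_upwards [hpos] with x hx hx'
  exact ⟨(hx hx').ne', Set.Ioo_subset_Ioc_self hx'⟩

theorem eigenvalue_strict_subadditivity_general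
    (s : ℝ) (hs1 : s < 1) (β : ℝ → ℝ) (hβmeas : Measurable β)
    (c : ℝ) (hc : 0 < c)
    (hβbound : ∀ θ ∈ Set.Icc (-(π/4)) (π/4), θ ≠ 0 →
      c * |θ| ^ (-(1:ℝ) - 2*s) ≤ β θ ∧ β θ ≤ c⁻¹ * |θ| ^ (-(1:ℝ) - 2*s))
    (lam : ℕ → ℝ)
    (hlam : ∀ n : ℕ, 1 ≤ n →
      lam n = ∫ θ in (-(π/4))..(π/4),
        β θ * (1 - Real.cos θ ^ (2*n) - Real.sin θ ^ (2*n))) :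
    ∀ j k : ℕ, 2 ≤ j → 2 ≤ k → lam (j + k) < lam j + lam k := by
  intro j k hj hk
  have hπ : -(π / 4) < π / 4 := by linarith [pi_pos]
  have hβ_pos : ∀ θ ∈ Set.Icc (-(π / 4)) (π / 4), θ ≠ 0 → 0 < β θ := fun θ hθ h0 =>
    lt_of_lt_of_le (by have := abs_pos.2 h0; positivity) (hβbound θ hθ h0).1
  have hβ_abs : ∀ θ ∈ Set.uIcc (-(π / 4)) (π / 4), θ ≠ 0 →
      |β θ| ≤ c⁻¹ * |θ| ^ (-(1:ℝ) - 2 * s) := by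
    rw [Set.uIcc_of_le hπ.le]
    exact fun θ hθ h0 => (abs_of_pos (hβ_pos θ hθ h0)).trans_le (hβbound θ hθ h0).2
  have hint : ∀ n : ℕ, n ≠ 0 → IntervalIntegrable
      (fun θ => β θ * (1 - cos θ ^ (2 * n) - sin θ ^ (2 * n))) volume (-(π / 4)) (π / 4) :=
    fun n hn => intervalIntegrable_mul_of_abs_le_rpow hβmeas (by fun_prop) (by linarith) hβ_abs
      (fun θ => abs_one_sub_cos_pow_sub_sin_pow_le θ hn)
  have hint_j := hint j (by omega)
  have hint_k := hint k (by omega)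
  have hint_jk := hint (j + k) (by omega)
  rw [hlam _ (by omega), hlam j (by omega), hlam k (by omega), ← sub_pos,
    ← intervalIntegral.integral_add hint_j hint_k,
    ← intervalIntegral.integral_sub (hint_j.add hint_k) hint_jk]
  refine intervalIntegral_pos_of_ae_pos_on ((hint_j.add hint_k).sub hint_jk) ?_ hπ
  filter_upwards [Measure.ae_ne volume 0] with θ h0 hθ
  have hθ' : θ ∈ Set.Ioo (-(π / 2)) (π / 2) :=
    ⟨by linarith [hθ.1, pi_pos], by linarith [hθ.2, pi_pos]⟩
  have defect_pos := mul_pos (hβ_pos θ (Set.Ioo_subset_Icc_self hθ) h0)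
    (sub_pos.2 (one_sub_cos_pow_sub_sin_pow_add_lt h0 hθ' hj hk))
  linarith

theorem eigenvalue_strict_subadditivity
    (s : ℝ) (hs0 : 0 < s) (hs1 : s < 1) (β : ℝ → ℝ) (hβmeas : Measurable β)
    (c : ℝ) (hc : 0 < c)
    (hβbound : ∀ θ ∈ Set.Icc (-(π/4)) (π/4), θ ≠ 0 →
      c * |θ| ^ (-(1:ℝ) - 2*s) ≤ β θ ∧ β θ ≤ c⁻¹ * |θ| ^ (-(1:ℝ) - 2*s))
    (lam : ℕ → ℝ)
    (hlam : ∀ n : ℕ, 1 ≤ n →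
      lam n = ∫ θ in (-(π/4))..(π/4),
        β θ * (1 - Real.cos θ ^ (2*n) - Real.sin θ ^ (2*n))) :
    ∀ j k : ℕ, 2 ≤ j → 2 ≤ k → lam (j + k) < lam j + lam k :=
  eigenvalue_strict_subadditivity_general s hs1 β hβmeas c hc hβbound lam hlam
end

section
/- For all integers j, k ≥ 2 and every θ ∈ [−π/4, π/4] with θ ≠ 0, one has 1 + (cos θ)^{2(j+k)} + (sin θ)^{2(j+k)} − (cos θ)^{2j} − (sin θ)^{2j} − (cos θ)^{2k} − (sin θ)^{2k} > 0. -/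
open Real

/- With x = cos² θ and y = sin² θ (so x + y = 1, both positive once θ ≠ 0 in [-π/4, π/4]) the
expression is (1 - x^j)(1 - x^k) + (1 - y^j)(1 - y^k) - 1. Since 1 - x^n ≥ 1 - x² = y(1 + x) for
n ≥ 2, it is at least (y(1 + x))² + (x(1 + y))² - 1 = 2(xy)². -/

lemma mul_one_add_le_one_sub_pow {x y : ℝ} (hx : 0 ≤ x) (hy : 0 ≤ y) (hxy : x + y = 1) {n : ℕ}
    (hn : 2 ≤ n) : y * (1 + x) ≤ 1 - x ^ n := by
  have hx1 : x ≤ 1 := by linarith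
  have : x ^ n ≤ x ^ 2 := pow_le_pow_of_le_one hx hx1 hn
  nlinarith

lemma sq_mul_one_add_add_sq_mul_one_add {x y : ℝ} (hxy : x + y = 1) :
    (y * (1 + x)) ^ 2 + (x * (1 + y)) ^ 2 = 1 + 2 * (x * y) ^ 2 := by
  obtain rfl : y = 1 - x := by linarith
  ring

lemma one_add_pow_add_sub_pow_pos {x y : ℝ} (hx : 0 < x) (hy : 0 < y) (hxy : x + y = 1)
    {j k : ℕ} (hj : 2 ≤ j) (hk : 2 ≤ k) :
    0 < 1 + x ^ (j + k) + y ^ (j + k) - x ^ j - y ^ j - x ^ k - y ^ k := by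
  have hyx : y + x = 1 := by linarith
  have hxj := mul_one_add_le_one_sub_pow hx.le hy.le hxy hj
  have hxk := mul_one_add_le_one_sub_pow hx.le hy.le hxy hk
  have hyj := mul_one_add_le_one_sub_pow hy.le hx.le hyx hj
  have hyk := mul_one_add_le_one_sub_pow hy.le hx.le hyx hk
  have hy_mul_nonneg : 0 ≤ y * (1 + x) := by positivity
  have hx_mul_nonneg : 0 ≤ x * (1 + y) := by positivity
  calc 0 < 2 * (x * y) ^ 2 := by positivity
    _ = (y * (1 + x)) * (y * (1 + x)) + (x * (1 + y)) * (x * (1 + y)) - 1 := by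
      rw [← sq, ← sq, sq_mul_one_add_add_sq_mul_one_add hxy]; ring
    _ ≤ (1 - x ^ j) * (1 - x ^ k) + (1 - y ^ j) * (1 - y ^ k) - 1 := by
      gcongr <;> linarith
    _ = 1 + x ^ (j + k) + y ^ (j + k) - x ^ j - y ^ j - x ^ k - y ^ k := by ring

theorem trig_pointwise_inequality (j k : ℕ) (hj : 2 ≤ j) (hk : 2 ≤ k) (θ : ℝ)
    (hθ : θ ∈ Set.Icc (-(π/4)) (π/4)) (hθ0 : θ ≠ 0) :
    0 < 1 + Real.cos θ ^ (2*(j+k)) + Real.sin θ ^ (2*(j+k))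
      - Real.cos θ ^ (2*j) - Real.sin θ ^ (2*j)
      - Real.cos θ ^ (2*k) - Real.sin θ ^ (2*k) := by
  have := pi_pos
  obtain ⟨hθl, hθr⟩ := hθ
  have hcos : 0 < cos θ := cos_pos_of_mem_Ioo ⟨by linarith, by linarith⟩
  have hsin : sin θ ≠ 0 := fun h ↦
    hθ0 ((sin_eq_zero_iff_of_lt_of_lt (by linarith) (by linarith)).mp h)
  simp only [pow_mul]
  exact one_add_pow_add_sub_pow_pos (pow_pos hcos 2) (sq_pos_of_ne_zero hsin)
    (cos_sq_add_sin_sq θ) hj hk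
end

section
/- For all integers j, k ≥ 2 with (j, k) ≠ (2, 2) and every real t with 0 < t ≤ 1/2, one has 1 + (1−t)^{j+k} + t^{j+k} − (1−t)^j − t^j − (1−t)^k − t^k > 0. -/
/-! With `s = 1 - t`, the expression equals `(1 - s^j)(1 - s^k) + (1 - t^j)(1 - t^k) - 1`.
Since `0 < s, t < 1`, each factor `1 - x^n` grows with `n`, so the expression is at least its
value at `j = k = 2`, which (using `s + t = 1`) is `2 t² s² > 0`. -/

theorem sq_one_sub_pow_le_one_sub_pow_mul_one_sub_pow {R : Type*} [CommRing R] [PartialOrder R]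
    [IsOrderedRing R] {x : R} (hx0 : 0 ≤ x) (hx1 : x ≤ 1) {m j k : ℕ} (hj : m ≤ j) (hk : m ≤ k) :
    (1 - x ^ m) ^ 2 ≤ (1 - x ^ j) * (1 - x ^ k) := by
  have mono : ∀ n, m ≤ n → 1 - x ^ m ≤ 1 - x ^ n := fun n hn =>
    sub_le_sub_left (pow_le_pow_of_le_one hx0 hx1 hn) 1
  rw [sq]
  exact mul_le_mul (mono j hj) (mono k hk) (sub_nonneg.2 (pow_le_one₀ hx0 hx1))
    (sub_nonneg.2 (pow_le_one₀ hx0 hx1))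

theorem polynomial_inequality_general (j k : ℕ) (hj : 2 ≤ j) (hk : 2 ≤ k)
    (t : ℝ) (ht0 : 0 < t) (ht : t ≤ 1/2) :
    0 < 1 + (1-t)^(j+k) + t^(j+k) - (1-t)^j - t^j - (1-t)^k - t^k := by
  have hs0 : 0 < 1 - t := by linarith
  have hs := sq_one_sub_pow_le_one_sub_pow_mul_one_sub_pow hs0.le (by linarith) hj hk
  have ht' := sq_one_sub_pow_le_one_sub_pow_mul_one_sub_pow ht0.le (by linarith) hj hk
  calc 0 < 2 * t ^ 2 * (1 - t) ^ 2 := by positivity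
    _ = (1 - (1 - t) ^ 2) ^ 2 + (1 - t ^ 2) ^ 2 - 1 := by ring
    _ ≤ (1 - (1 - t) ^ j) * (1 - (1 - t) ^ k) + (1 - t ^ j) * (1 - t ^ k) - 1 := by linarith
    _ = 1 + (1-t)^(j+k) + t^(j+k) - (1-t)^j - t^j - (1-t)^k - t^k := by ring

theorem polynomial_inequality (j k : ℕ) (hj : 2 ≤ j) (hk : 2 ≤ k)
    (hjk : ¬(j = 2 ∧ k = 2)) (t : ℝ) (ht0 : 0 < t) (ht : t ≤ 1/2) :
    0 < 1 + (1-t)^(j+k) + t^(j+k) - (1-t)^j - t^j - (1-t)^k - t^k :=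
  polynomial_inequality_general j k hj hk t ht0 ht
end

section
/- For all integers j, k ≥ 2 and every real t with 0 < t ≤ 1/2, one has the product lower bound (1 − (1−t)^j)·(1 − (1−t)^k) ≥ t^j + t^k. -/
/-! Since `t ^ n` and `(1 - t) ^ n` decrease in `n`, it suffices to treat `j = k = 2`, where
`1 - (1 - t) ^ 2 = t (2 - t)` and `(2 - t) ^ 2 ≥ 9 / 4 ≥ 2` for `t ≤ 1 / 2`. -/

lemma two_mul_sq_le_one_sub_one_sub_sq_sq {t : ℝ} (ht : t ≤ 1 / 2) :
    2 * t ^ 2 ≤ (1 - (1 - t) ^ 2) ^ 2 := by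
  have h2 : 2 ≤ (2 - t) ^ 2 := by nlinarith
  calc 2 * t ^ 2 ≤ (2 - t) ^ 2 * t ^ 2 := mul_le_mul_of_nonneg_right h2 (sq_nonneg t)
    _ = (1 - (1 - t) ^ 2) ^ 2 := by ring

theorem product_lower_bound (j k : ℕ) (hj : 2 ≤ j) (hk : 2 ≤ k)
    (t : ℝ) (ht0 : 0 < t) (ht : t ≤ 1/2) :
    t^j + t^k ≤ (1 - (1-t)^j) * (1 - (1-t)^k) := by
  have ht1 : t ≤ 1 := by linarith
  have hs0 : 0 ≤ 1 - t := by linarith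
  have hs1 : 1 - t ≤ 1 := by linarith
  have hsq : 0 ≤ 1 - (1 - t) ^ 2 := sub_nonneg.2 (pow_le_one₀ hs0 hs1)
  have hj' : 1 - (1 - t) ^ 2 ≤ 1 - (1 - t) ^ j :=
    sub_le_sub_left (pow_le_pow_of_le_one hs0 hs1 hj) 1
  have hk' : 1 - (1 - t) ^ 2 ≤ 1 - (1 - t) ^ k :=
    sub_le_sub_left (pow_le_pow_of_le_one hs0 hs1 hk) 1
  calc t ^ j + t ^ k ≤ 2 * t ^ 2 := by
        linarith [pow_le_pow_of_le_one ht0.le ht1 hj, pow_le_pow_of_le_one ht0.le ht1 hk]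
    _ ≤ (1 - (1 - t) ^ 2) ^ 2 := two_mul_sq_le_one_sub_one_sub_sq_sq ht
    _ ≤ (1 - (1 - t) ^ j) * (1 - (1 - t) ^ k) := by
        rw [sq]; exact mul_le_mul hj' hk' hsq (hsq.trans hj')
end

section
/- Let 0 < s < 1. There exists a constant C > 0 such that for all integers n ≥ 1 and m ≥ 0, one has √(C(2n+2m, 2n))·Γ(n−s)·m!/Γ(n+m+1−s) ≤ C·n^{−3/4}·(1 + m/n)^s, where C(a, b) denotes the binomial coefficient a choose b and Γ denotes the real Gamma function. -/
/-!
Writing `c k` for the central binomial coefficient, the identity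
`C(2n+2m, 2n) · c n · c m = C(n+m, n)² · c (n+m)` and the two-sided bound
`16^k ≤ 4k · (c k)² ≤ 4 · 16^k` (for `k ≥ 1`) give
`√C(2n+2m, 2n) ≤ 2 n^{1/4} C(n+m, n)`, and `C(n+m, n) · m! = (n+m)! / n!`.
Log-convexity of `Γ` (in the Hölder form `Γ((1-t)x + t(x+1)) ≤ Γ(x)^{1-t} Γ(x+1)^t`)
yields `Γ(x+t) ≤ x^t Γ(x)` for `0 < t < 1`, hence `(n+m)! / Γ(n+m+1-s) ≲ (n+m)^s` and
`Γ(n-s) / n! ≲ n^{-1-s}`.  Multiplying, the left side is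
`≲ n^{1/4} (n+m)^s n^{-1-s} = n^{-3/4} (1 + m/n)^s`.
-/

open Real
open scoped Nat

theorem Nat.sixteen_pow_le_four_mul_mul_centralBinom_sq {k : ℕ} (hk : 1 ≤ k) :
    16 ^ k ≤ 4 * k * k.centralBinom ^ 2 := by
  induction k, hk using Nat.le_induction with
  | base => decide
  | succ k hk ih =>
    have hrec := congrArg (· ^ 2) (Nat.succ_mul_centralBinom_succ k)
    simp only [mul_pow] at hrec
    refine Nat.le_of_mul_le_mul_left ?_ (show 0 < (k + 1) ^ 2 by positivity)
    calc (k + 1) ^ 2 * 16 ^ (k + 1) = 16 * (k + 1) ^ 2 * 16 ^ k := by ring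
      _ ≤ 16 * (k + 1) ^ 2 * (4 * k * k.centralBinom ^ 2) := by gcongr
      _ ≤ 4 * (k + 1) * (2 ^ 2 * (2 * k + 1) ^ 2 * k.centralBinom ^ 2) := by
        nlinarith [Nat.zero_le ((k + 1) * k.centralBinom ^ 2)]
      _ = (k + 1) ^ 2 * (4 * (k + 1) * (k + 1).centralBinom ^ 2) := by rw [← hrec]; ring

theorem Nat.succ_mul_centralBinom_sq_le_sixteen_pow (k : ℕ) :
    (k + 1) * k.centralBinom ^ 2 ≤ 16 ^ k := by
  induction k with
  | zero => simp
  | succ k ih =>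
    have hrec := congrArg (· ^ 2) (Nat.succ_mul_centralBinom_succ k)
    simp only [mul_pow] at hrec
    refine Nat.le_of_mul_le_mul_left ?_ (show 0 < (k + 1) ^ 2 by positivity)
    calc (k + 1) ^ 2 * ((k + 1 + 1) * (k + 1).centralBinom ^ 2)
        = (k + 2) * ((k + 1) ^ 2 * (k + 1).centralBinom ^ 2) := by ring
      _ = (k + 2) * (2 ^ 2 * (2 * k + 1) ^ 2) * k.centralBinom ^ 2 := by rw [hrec]; ring
      _ ≤ 16 * (k + 1) ^ 2 * ((k + 1) * k.centralBinom ^ 2) := by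
        nlinarith [Nat.zero_le ((k + 1) * k.centralBinom ^ 2), Nat.zero_le (k.centralBinom ^ 2)]
      _ ≤ 16 * (k + 1) ^ 2 * 16 ^ k := by gcongr
      _ = (k + 1) ^ 2 * 16 ^ (k + 1) := by ring

theorem Nat.centralBinom_mul_factorial_mul_factorial (n : ℕ) :
    n.centralBinom * n ! * n ! = (2 * n)! := by
  rw [two_mul, Nat.centralBinom_eq_two_mul_choose, two_mul]
  exact Nat.add_choose_mul_factorial_mul_factorial n n

theorem Nat.choose_mul_centralBinom_mul_centralBinom (n m : ℕ) :
    (2 * n + 2 * m).choose (2 * n) * n.centralBinom * m.centralBinom =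
      (n + m).choose n ^ 2 * (n + m).centralBinom := by
  refine Nat.eq_of_mul_eq_mul_right (show 0 < (n ! * m !) ^ 2 by positivity) ?_
  have hD : (n + m).choose n * n ! * m ! = (n + m)! := by
    rw [Nat.choose_symm_add]; exact Nat.add_choose_mul_factorial_mul_factorial n m
  calc (2 * n + 2 * m).choose (2 * n) * n.centralBinom * m.centralBinom * (n ! * m !) ^ 2
      = (2 * n + 2 * m).choose (2 * n) * (n.centralBinom * n ! * n !) *
          (m.centralBinom * m ! * m !) := by ring
    _ = (2 * (n + m))! := by
      rw [Nat.centralBinom_mul_factorial_mul_factorial,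
        Nat.centralBinom_mul_factorial_mul_factorial, mul_add, Nat.choose_symm_add,
        Nat.add_choose_mul_factorial_mul_factorial]
    _ = (n + m).centralBinom * ((n + m).choose n * n ! * m !) ^ 2 := by
      rw [hD, sq, ← mul_assoc, Nat.centralBinom_mul_factorial_mul_factorial]
    _ = (n + m).choose n ^ 2 * (n + m).centralBinom * (n ! * m !) ^ 2 := by ring

theorem Nat.succ_add_mul_choose_two_mul_add_two_mul_sq_le {n m : ℕ} (hn : 1 ≤ n)
    (hm : 1 ≤ m) :
    (n + m + 1) * (2 * n + 2 * m).choose (2 * n) ^ 2 ≤ 16 * n * m * (n + m).choose n ^ 4 := by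
  refine Nat.le_of_mul_le_mul_left ?_ (show 0 < 16 ^ (n + m) by positivity)
  calc 16 ^ (n + m) * ((n + m + 1) * (2 * n + 2 * m).choose (2 * n) ^ 2)
      = (n + m + 1) * (2 * n + 2 * m).choose (2 * n) ^ 2 * (16 ^ n * 16 ^ m) := by ring
    _ ≤ (n + m + 1) * (2 * n + 2 * m).choose (2 * n) ^ 2 *
          ((4 * n * n.centralBinom ^ 2) * (4 * m * m.centralBinom ^ 2)) := by
      gcongr
      · exact Nat.sixteen_pow_le_four_mul_mul_centralBinom_sq hn
      · exact Nat.sixteen_pow_le_four_mul_mul_centralBinom_sq hm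
    _ = 16 * n * m * (n + m + 1) *
          ((2 * n + 2 * m).choose (2 * n) * n.centralBinom * m.centralBinom) ^ 2 := by ring
    _ = 16 * n * m * (n + m).choose n ^ 4 * ((n + m + 1) * (n + m).centralBinom ^ 2) := by
      rw [Nat.choose_mul_centralBinom_mul_centralBinom]; ring
    _ ≤ 16 * n * m * (n + m).choose n ^ 4 * 16 ^ (n + m) := by
      gcongr; exact Nat.succ_mul_centralBinom_sq_le_sixteen_pow _
    _ = 16 ^ (n + m) * (16 * n * m * (n + m).choose n ^ 4) := by ring

theorem Nat.choose_two_mul_add_two_mul_sq_le {n : ℕ} (hn : 1 ≤ n) (m : ℕ) :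
    (2 * n + 2 * m).choose (2 * n) ^ 2 ≤ 16 * n * (n + m).choose n ^ 4 := by
  rcases Nat.eq_zero_or_pos m with rfl | hm
  · simp; omega
  · refine Nat.le_of_mul_le_mul_left ?_ (show 0 < n + m + 1 by omega)
    calc (n + m + 1) * (2 * n + 2 * m).choose (2 * n) ^ 2
        ≤ 16 * n * m * (n + m).choose n ^ 4 :=
          Nat.succ_add_mul_choose_two_mul_add_two_mul_sq_le hn hm
      _ = 16 * n * (n + m).choose n ^ 4 * m := by ring
      _ ≤ 16 * n * (n + m).choose n ^ 4 * (n + m + 1) := by gcongr; omega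
      _ = (n + m + 1) * (16 * n * (n + m).choose n ^ 4) := by ring

namespace Real

theorem Gamma_add_le_Gamma_mul_rpow {x t : ℝ} (hx : 0 < x) (ht0 : 0 < t) (ht1 : t < 1) :
    Gamma (x + t) ≤ Gamma x * x ^ t := by
  have hGx := Gamma_pos_of_pos hx
  calc Gamma (x + t) = Gamma ((1 - t) * x + t * (x + 1)) := by ring_nf
    _ ≤ Gamma x ^ (1 - t) * Gamma (x + 1) ^ t :=
      Gamma_mul_add_mul_le_rpow_Gamma_mul_rpow_Gamma hx (by linarith) (by linarith) ht0 (by ring)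
    _ = Gamma x * x ^ t := by
      rw [Gamma_add_one hx.ne', mul_rpow hx.le hGx.le, mul_left_comm, ← rpow_add hGx,
        sub_add_cancel, rpow_one, mul_comm]

theorem Gamma_sub_mul_rpow_le {x t : ℝ} (hx : 1 < x) (ht0 : 0 < t) (ht1 : t < 1) :
    Gamma (x - t) * (x - 1) ^ t ≤ Gamma x := by
  have hx1 : 0 < x - 1 := by linarith
  have h := Gamma_add_le_Gamma_mul_rpow hx1 (sub_pos.2 ht1) (by linarith : 1 - t < 1)
  calc Gamma (x - t) * (x - 1) ^ t = Gamma (x - 1 + (1 - t)) * (x - 1) ^ t := by ring_nf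
    _ ≤ Gamma (x - 1) * (x - 1) ^ (1 - t) * (x - 1) ^ t := by gcongr
    _ = Gamma x := by
      rw [mul_assoc, ← rpow_add hx1, sub_add_cancel, rpow_one, mul_comm,
        ← Gamma_add_one hx1.ne', sub_add_cancel]

theorem rpow_le_two_mul_rpow {x y s : ℝ} (hy : 0 ≤ y) (hyx : y ≤ 2 * x) (hs0 : 0 ≤ s)
    (hs1 : s ≤ 1) : y ^ s ≤ 2 * x ^ s := by
  have hx : 0 ≤ x := by linarith
  calc y ^ s ≤ (2 * x) ^ s := rpow_le_rpow hy hyx hs0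
    _ = 2 ^ s * x ^ s := mul_rpow zero_le_two hx
    _ ≤ 2 * x ^ s := by
      gcongr
      simpa using rpow_le_rpow_of_exponent_le one_le_two hs1

theorem Gamma_natCast_sub_mul_rpow_le {s : ℝ} (hs0 : 0 < s) (hs1 : s < 1) {n : ℕ}
    (hn : 1 ≤ n) :
    Gamma (n - s) * (n : ℝ) ^ s ≤ max 2 (Gamma (1 - s)) * Gamma n := by
  rcases hn.eq_or_lt with rfl | hn2
  · simp
  have hn2 : (2 : ℝ) ≤ n := by exact_mod_cast hn2
  have hΓ : 0 < Gamma (n - s) := Gamma_pos_of_pos (by linarith)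
  calc Gamma (n - s) * (n : ℝ) ^ s ≤ Gamma (n - s) * (2 * (n - 1 : ℝ) ^ s) := by
        gcongr; exact rpow_le_two_mul_rpow (by positivity) (by linarith) hs0.le hs1.le
    _ = 2 * (Gamma (n - s) * (n - 1 : ℝ) ^ s) := by ring
    _ ≤ max 2 (Gamma (1 - s)) * Gamma n :=
      mul_le_mul (le_max_left _ _) (Gamma_sub_mul_rpow_le (by linarith) hs0 hs1)
        (mul_nonneg hΓ.le (rpow_nonneg (by linarith) _)) (by positivity)

theorem factorial_div_Gamma_le {s : ℝ} (hs0 : 0 < s) (hs1 : s < 1) {k : ℕ} (hk : 1 ≤ k) :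
    (k ! : ℝ) / Gamma (k + 1 - s) ≤ 2 * (k : ℝ) ^ s := by
  have hk : (1 : ℝ) ≤ k := by exact_mod_cast hk
  rw [div_le_iff₀ (Gamma_pos_of_pos (by linarith))]
  have h := Gamma_add_le_Gamma_mul_rpow (by linarith : 0 < (k : ℝ) + 1 - s) hs0 hs1
  rw [sub_add_cancel, Gamma_nat_eq_factorial] at h
  calc (k ! : ℝ) ≤ Gamma (k + 1 - s) * (k + 1 - s) ^ s := h
    _ ≤ Gamma (k + 1 - s) * (2 * (k : ℝ) ^ s) := by
      gcongr
      · exact (Gamma_pos_of_pos (by linarith)).le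
      · exact rpow_le_two_mul_rpow (by linarith) (by linarith) hs0.le hs1.le
    _ = 2 * (k : ℝ) ^ s * Gamma (k + 1 - s) := by ring

theorem Gamma_natCast_sub_div_factorial_le {s : ℝ} (hs0 : 0 < s) (hs1 : s < 1) {n : ℕ}
    (hn : 1 ≤ n) : Gamma (n - s) / n ! ≤ max 2 (Gamma (1 - s)) * (n : ℝ) ^ (-1 - s) := by
  have hN : (0 : ℝ) < n := by exact_mod_cast hn
  rw [div_le_iff₀ (by positivity)]
  calc Gamma (n - s) = Gamma (n - s) * (n : ℝ) ^ s * (n : ℝ) ^ (-s) := by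
        rw [mul_assoc, ← rpow_add hN, add_neg_cancel, rpow_zero, mul_one]
    _ ≤ max 2 (Gamma (1 - s)) * Gamma n * (n : ℝ) ^ (-s) := by
      gcongr ?_ * _; exact Gamma_natCast_sub_mul_rpow_le hs0 hs1 hn
    _ = max 2 (Gamma (1 - s)) * (n : ℝ) ^ (-1 - s) * n ! := by
      rw [← Gamma_nat_eq_factorial, Gamma_add_one hN.ne', show -1 - s = -s + -1 by ring,
        rpow_add hN, rpow_neg_one]
      field_simp

end Real

theorem sqrt_choose_two_mul_add_two_mul_le {n : ℕ} (hn : 1 ≤ n) (m : ℕ) :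
    √((2 * n + 2 * m).choose (2 * n) : ℝ) ≤
      2 * (n : ℝ) ^ (4⁻¹ : ℝ) * (n + m).choose n := by
  refine (pow_le_pow_iff_left₀ (by positivity) (by positivity) four_ne_zero).1 ?_
  calc √((2 * n + 2 * m).choose (2 * n) : ℝ) ^ 4
      = (((2 * n + 2 * m).choose (2 * n) ^ 2 : ℕ) : ℝ) := by
        rw [show 4 = 2 * 2 from rfl, pow_mul, sq_sqrt (by positivity)]; push_cast; rfl
    _ ≤ ((16 * n * (n + m).choose n ^ 4 : ℕ) : ℝ) := by
      exact_mod_cast Nat.choose_two_mul_add_two_mul_sq_le hn m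
    _ = (2 * (n : ℝ) ^ (4⁻¹ : ℝ) * (n + m).choose n) ^ 4 := by
      rw [mul_pow, mul_pow, show (4⁻¹ : ℝ) = ((4 : ℕ) : ℝ)⁻¹ by norm_num,
        rpow_inv_natCast_pow (by positivity) four_ne_zero]
      push_cast; ring

theorem sqrt_choose_two_mul_add_two_mul_mul_factorial_le {n : ℕ} (hn : 1 ≤ n) (m : ℕ) :
    √((2 * n + 2 * m).choose (2 * n) : ℝ) * m ! ≤
      2 * (n : ℝ) ^ (4⁻¹ : ℝ) * ((n + m)! / n !) := by
  have hD : ((n + m).choose n * m ! : ℝ) = (n + m)! / n ! := by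
    rw [eq_div_iff (by positivity)]
    have h := Nat.add_choose_mul_factorial_mul_factorial m n
    rw [add_comm m n] at h
    exact_mod_cast h
  rw [← hD, ← mul_assoc]
  gcongr
  exact sqrt_choose_two_mul_add_two_mul_le hn m

theorem stirling_gamma_binomial_estimate (s : ℝ) (hs0 : 0 < s) (hs1 : s < 1) :
    ∃ C : ℝ, 0 < C ∧ ∀ n m : ℕ, 1 ≤ n →
      Real.sqrt (((2*n + 2*m).choose (2*n) : ℝ)) * Real.Gamma ((n:ℝ) - s) *
          (Nat.factorial m : ℝ) / Real.Gamma ((n:ℝ) + (m:ℝ) + 1 - s) ≤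
        C * (n:ℝ) ^ (-(3:ℝ)/4) * (1 + (m:ℝ)/(n:ℝ)) ^ s := by
  set K := max 2 (Gamma (1 - s))
  refine ⟨4 * K, by positivity, fun n m hn => ?_⟩
  have hN : (1 : ℝ) ≤ n := by exact_mod_cast hn
  have hfac := factorial_div_Gamma_le hs0 hs1 (show 1 ≤ n + m by omega)
  push_cast at hfac
  have hΓ : 0 < Gamma (n - s) := Gamma_pos_of_pos (by linarith)
  set X := √((2 * n + 2 * m).choose (2 * n) : ℝ)
  set G := Gamma (n + m + 1 - s)
  calc X * Gamma (n - s) * m ! / G = X * m ! * Gamma (n - s) / G := by ring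
    _ ≤ 2 * (n : ℝ) ^ (4⁻¹ : ℝ) * ((n + m)! / n !) * Gamma (n - s) / G := by
      gcongr ?_ * _ / _
      · exact (Gamma_pos_of_pos (by linarith)).le
      · exact sqrt_choose_two_mul_add_two_mul_mul_factorial_le hn m
    _ = 2 * (n : ℝ) ^ (4⁻¹ : ℝ) * ((n + m)! / G) * (Gamma (n - s) / n !) := by ring
    _ ≤ 2 * (n : ℝ) ^ (4⁻¹ : ℝ) *
          (2 * (n + m : ℝ) ^ s) * (K * (n : ℝ) ^ (-1 - s)) := by
      gcongr
      exact Gamma_natCast_sub_div_factorial_le hs0 hs1 hn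
    _ = 4 * K * (n : ℝ) ^ (-(3 : ℝ) / 4) * (1 + m / n) ^ s := by
      rw [show 1 + (m : ℝ) / n = (n + m) / n by field_simp,
        div_rpow (by positivity) (by positivity), show -1 - s = -s + -1 by ring,
        show -(3 : ℝ) / 4 = 4⁻¹ + -1 by norm_num,
        rpow_add (by positivity), rpow_add (by positivity), rpow_neg (by positivity)]
      ring
end

section
/- Let 0 < s < 1. There exists a constant C > 0 such that for every integer n ≥ 1, Σ_{k+l=n, k≥1, l≥0} (1 + l/k)^{2s}/(k^{3/2}·(2l + 3/2)^s) ≤ C·(2n + 3/2)^s, where the sum runs over all pairs of integers (k, l) with k ≥ 1, l ≥ 0 and k + l = n. -/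
/-!
Writing `l = n - k`, the factor `(1 + l/k)^2 / (2l + 3/2)` is at most `2n + 3/2` (as `k ≥ 1`), so
every summand is bounded by `(2n + 3/2)^s · k^{-3/2}`; summing, `C = ζ(3/2)` works.
-/

open Real

lemma one_add_div_sq_le_mul {k l : ℝ} (hk : 1 ≤ k) (hl : 0 ≤ l) :
    (1 + l / k) ^ 2 ≤ (2 * l + 3 / 2) * (2 * (k + l) + 3 / 2) := by
  have hlk : l / k ≤ l := div_le_self hl hk
  have hlk0 : 0 ≤ l / k := by positivity
  nlinarith

lemma one_add_div_rpow_div_le {k l s : ℝ} (hk : 1 ≤ k) (hl : 0 ≤ l) (hs : 0 ≤ s) :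
    (1 + l / k) ^ (2 * s) / (2 * l + 3 / 2) ^ s ≤ (2 * (k + l) + 3 / 2) ^ s := by
  have hb : 0 < 2 * l + 3 / 2 := by linarith
  have ha : 0 ≤ 1 + l / k := by positivity
  rw [rpow_mul ha, rpow_two, ← div_rpow (by positivity) hb.le]
  refine rpow_le_rpow (by positivity) ?_ hs
  rw [div_le_iff₀ hb, mul_comm]
  exact one_add_div_sq_le_mul hk hl

lemma convolution_term_le {s : ℝ} (hs : 0 ≤ s) {n k : ℕ} (hk : 1 ≤ k) (hkn : k ≤ n) :
    (1 + ((n - k : ℕ) : ℝ) / (k : ℝ)) ^ (2 * s) /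
        ((k : ℝ) ^ ((3 : ℝ) / 2) * (2 * ((n - k : ℕ) : ℝ) + 3 / 2) ^ s) ≤
      (2 * (n : ℝ) + 3 / 2) ^ s * ((k : ℝ) ^ ((3 : ℝ) / 2))⁻¹ := by
  have hkl : (k : ℝ) + ((n - k : ℕ) : ℝ) = n := by exact_mod_cast Nat.add_sub_cancel' hkn
  have h := one_add_div_rpow_div_le (k := k) (l := ((n - k : ℕ) : ℝ)) (by exact_mod_cast hk)
    (Nat.cast_nonneg _) hs
  rw [hkl] at h
  rw [div_mul_eq_div_div_swap, div_eq_mul_inv]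
  exact mul_le_mul_of_nonneg_right h (by positivity)

theorem discrete_convolution_estimate_general (s : ℝ) (hs0 : 0 < s) :
    ∃ C : ℝ, 0 < C ∧ ∀ n : ℕ, 1 ≤ n →
      ∑ k ∈ Finset.Icc 1 n,
          (1 + ((n - k : ℕ) : ℝ)/(k:ℝ)) ^ (2*s) /
            ((k:ℝ) ^ ((3:ℝ)/2) * (2*((n - k : ℕ):ℝ) + 3/2) ^ s) ≤
        C * (2*(n:ℝ) + 3/2) ^ s := by
  set w : ℕ → ℝ := fun k => ((k : ℝ) ^ ((3 : ℝ) / 2))⁻¹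
  have hw : Summable w := summable_nat_rpow_inv.2 (by norm_num)
  refine ⟨∑' k, w k, hw.tsum_pos (fun _ => by positivity) 1 (by simp [w]), fun n _ => ?_⟩
  calc _ ≤ ∑ k ∈ Finset.Icc 1 n, (2 * (n : ℝ) + 3 / 2) ^ s * w k :=
        Finset.sum_le_sum fun k hk =>
          convolution_term_le hs0.le (Finset.mem_Icc.1 hk).1 (Finset.mem_Icc.1 hk).2
    _ = (∑ k ∈ Finset.Icc 1 n, w k) * (2 * (n : ℝ) + 3 / 2) ^ s := by
        rw [← Finset.mul_sum, mul_comm]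
    _ ≤ (∑' k, w k) * (2 * (n : ℝ) + 3 / 2) ^ s := by
        gcongr
        exact hw.sum_le_tsum _ fun _ _ => by positivity

theorem discrete_convolution_estimate (s : ℝ) (hs0 : 0 < s) (hs1 : s < 1) :
    ∃ C : ℝ, 0 < C ∧ ∀ n : ℕ, 1 ≤ n →
      ∑ k ∈ Finset.Icc 1 n,
          (1 + ((n - k : ℕ) : ℝ)/(k:ℝ)) ^ (2*s) /
            ((k:ℝ) ^ ((3:ℝ)/2) * (2*((n - k : ℕ):ℝ) + 3/2) ^ s) ≤
        C * (2*(n:ℝ) + 3/2) ^ s :=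
  discrete_convolution_estimate_general s hs0
end

section
/- Let 0 < s < 1. There exists a constant C > 0 such that for all sequences of nonnegative reals (f_k)_{k≥0}, (g_l)_{l≥0}, (h_n)_{n≥0}, one has Σ_{k≥1, l≥0} (1 + l/k)^s·k^{−3/4}·f_k·g_l·h_{k+l} ≤ C·(Σ_{k≥0} f_k²)^{1/2}·(Σ_{l≥0} (2l + 3/2)^s·g_l²)^{1/2}·(Σ_{n≥0} (2n + 3/2)^s·h_n²)^{1/2}, where the left-hand double sum runs over all integers k ≥ 1 and l ≥ 0 (with value +∞ allowed if divergent, the inequality holding in [0, +∞]). -/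
/-!
With `λₙ = 2n + 3/2`, one has `(k + l)² ≤ k λₗ λ_{k+l}` for `k ≥ 1`, so the kernel
`(1 + l/k)^s k^{-3/4}` is at most `k^{-(s/2 + 3/4)} λₗ^{s/2} λ_{k+l}^{s/2}`.
For fixed `k`, Cauchy–Schwarz in `l` bounds the inner sum by `‖λ^{s/2} g‖ ‖λ^{s/2} h‖`;
Cauchy–Schwarz in `k` then costs `‖f‖` times the `ℓ²` norm of `k^{-(s/2 + 3/4)}`,
which is finite because `s + 3/2 > 1`.
-/

open scoped ENNReal

theorem ENNReal.inner_le_Lp_mul_Lq_tsum {ι : Type*} (f g : ι → ℝ≥0∞) {p q : ℝ}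
    (hpq : p.HolderConjugate q) :
    ∑' i, f i * g i ≤ (∑' i, f i ^ p) ^ (1 / p) * (∑' i, g i ^ q) ^ (1 / q) := by
  rw [ENNReal.tsum_eq_iSup_sum]
  refine iSup_le fun t => (ENNReal.inner_le_Lp_mul_Lq t f g hpq).trans ?_
  have := hpq.pos
  have := hpq.symm.pos
  gcongr <;> exact ENNReal.sum_le_tsum t

theorem ENNReal.tsum_mul_comp_le_of_injective {ι κ : Type*} (f : ι → ℝ≥0∞) (g : κ → ℝ≥0∞)
    {e : ι → κ} (he : Function.Injective e) :
    ∑' i, f i * g (e i) ≤ (∑' i, f i ^ 2) ^ ((1:ℝ)/2) * (∑' j, g j ^ 2) ^ ((1:ℝ)/2) := by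
  calc ∑' i, f i * g (e i)
      ≤ (∑' i, f i ^ 2) ^ ((1:ℝ)/2) * (∑' i, g (e i) ^ 2) ^ ((1:ℝ)/2) := by
        simpa only [ENNReal.rpow_two] using
          ENNReal.inner_le_Lp_mul_Lq_tsum f (fun i => g (e i)) .two_two
    _ ≤ _ := by
        gcongr
        exact ENNReal.tsum_comp_le_tsum_of_injective he fun j => g j ^ 2

theorem ENNReal.tsum_tsum_mul_shift_le (a G H : ℕ → ℝ≥0∞) :
    ∑' k, ∑' l, a k * (G l * H (k + 1 + l)) ≤
      (∑' k, a k) * ((∑' l, G l ^ 2) ^ ((1:ℝ)/2) * (∑' n, H n ^ 2) ^ ((1:ℝ)/2)) := by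
  calc ∑' k, ∑' l, a k * (G l * H (k + 1 + l))
      = ∑' k, a k * ∑' l, G l * H (k + 1 + l) := by simp_rw [ENNReal.tsum_mul_left]
    _ ≤ ∑' k, a k * ((∑' l, G l ^ 2) ^ ((1:ℝ)/2) * (∑' n, H n ^ 2) ^ ((1:ℝ)/2)) := by
        gcongr with k
        exact ENNReal.tsum_mul_comp_le_of_injective G H (add_right_injective (k + 1))
    _ = _ := ENNReal.tsum_mul_right

theorem summable_nat_add_one_rpow_neg {p : ℝ} (hp : 1 < p) :
    Summable fun k : ℕ => ((k:ℝ) + 1) ^ (-p) := by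
  refine ((Real.summable_one_div_nat_add_rpow 1 p).mpr hp).congr fun k => ?_
  rw [abs_of_nonneg (by positivity), one_div, Real.rpow_neg (by positivity)]

theorem tsum_ofReal_nat_add_one_rpow_sq {p : ℝ} (hp : 1 < p) :
    ∑' k : ℕ, ENNReal.ofReal (((k:ℝ) + 1) ^ (-(p/2))) ^ 2 =
      ENNReal.ofReal (∑' k : ℕ, ((k:ℝ) + 1) ^ (-p)) := by
  rw [ENNReal.ofReal_tsum_of_nonneg (fun _ => by positivity) (summable_nat_add_one_rpow_neg hp)]
  congr 1 with k
  rw [← ENNReal.ofReal_pow (by positivity), ← Real.rpow_mul_natCast (by positivity)]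
  congr 2
  push_cast; ring

theorem sq_add_le_mul_hermite {K L : ℝ} (hK : 1 ≤ K) (hL : 0 ≤ L) :
    (K + L) ^ 2 ≤ K * ((2 * L + 3/2) * (2 * (K + L) + 3/2)) := by
  nlinarith [mul_nonneg (sub_nonneg.2 hK) (mul_nonneg hL hL), mul_nonneg hL hL,
    mul_nonneg (sub_nonneg.2 hK) hL]

theorem one_add_div_rpow_mul_rpow_le {s K L : ℝ} (hs : 0 ≤ s) (hK : 1 ≤ K) (hL : 0 ≤ L) :
    (1 + L / K) ^ s * K ^ (-(3:ℝ)/4) ≤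
      K ^ (-((s + 3/2) / 2)) * ((2 * L + 3/2) ^ (s/2) * (2 * (K + L) + 3/2) ^ (s/2)) := by
  have hK0 : 0 < K := by linarith
  have hbase : (1 + L / K) ^ 2 ≤ K⁻¹ * ((2 * L + 3/2) * (2 * (K + L) + 3/2)) := by
    rw [one_add_div hK0.ne', div_pow, div_le_iff₀ (by positivity)]
    calc (K + L) ^ 2 ≤ K * ((2 * L + 3/2) * (2 * (K + L) + 3/2)) :=
          sq_add_le_mul_hermite hK hL
      _ = _ := by field_simp
  calc (1 + L / K) ^ s * K ^ (-(3:ℝ)/4)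
      = ((1 + L / K) ^ 2) ^ (s/2) * K ^ (-(3:ℝ)/4) := by
        rw [← Real.rpow_natCast_mul (by positivity)]; push_cast; ring_nf
    _ ≤ (K⁻¹ * ((2 * L + 3/2) * (2 * (K + L) + 3/2))) ^ (s/2) * K ^ (-(3:ℝ)/4) := by
        gcongr
    _ = _ := by
        rw [Real.mul_rpow (by positivity) (by positivity), Real.mul_rpow (by positivity)
          (by positivity), Real.inv_rpow hK0.le, ← Real.rpow_neg hK0.le, mul_right_comm,
          ← Real.rpow_add hK0]
        ring_nf

/-- The `n`-th radial Hermite coefficient of `𝓗^t g`, where `2n + 3/2` is the `n`-th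
eigenvalue of `𝓗 = -Δ + |v|²/4` on radial modes. -/
noncomputable def hermitePowCoeff (t : ℝ) (g : ℕ → ℝ) (n : ℕ) : ℝ≥0∞ :=
  ENNReal.ofReal ((2 * (n:ℝ) + 3/2) ^ t * g n)

theorem hermitePowCoeff_half_sq {s : ℝ} {g : ℕ → ℝ} {n : ℕ} (hg : 0 ≤ g n) :
    hermitePowCoeff (s/2) g n ^ 2 = ENNReal.ofReal ((2 * (n:ℝ) + 3/2) ^ s * g n ^ 2) := by
  rw [hermitePowCoeff, ← ENNReal.ofReal_pow (by positivity), mul_pow,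
    ← Real.rpow_mul_natCast (by positivity)]
  norm_num

theorem ofReal_convolution_term_le {s : ℝ} (hs : 0 ≤ s) {f g h : ℕ → ℝ} (hf : ∀ n, 0 ≤ f n)
    (hg : ∀ n, 0 ≤ g n) (hh : ∀ n, 0 ≤ h n) (k l : ℕ) :
    ENNReal.ofReal ((1 + (l:ℝ)/((k:ℝ)+1)) ^ s * ((k:ℝ)+1) ^ (-(3:ℝ)/4) *
        f (k+1) * g l * h (k+1+l)) ≤
      ENNReal.ofReal (((k:ℝ) + 1) ^ (-((s + 3/2) / 2))) * ENNReal.ofReal (f (k+1)) *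
        (hermitePowCoeff (s/2) g l * hermitePowCoeff (s/2) h (k+1+l)) := by
  have hf' := hf (k+1)
  have hg' := hg l
  have hh' := hh (k+1+l)
  simp only [hermitePowCoeff]
  rw [← ENNReal.ofReal_mul (by positivity), ← ENNReal.ofReal_mul (by positivity),
    ← ENNReal.ofReal_mul (by positivity)]
  apply ENNReal.ofReal_le_ofReal
  have hkernel := one_add_div_rpow_mul_rpow_le hs (K := (k:ℝ) + 1) (L := l) (by simp)
    (Nat.cast_nonneg l)
  calc (1 + (l:ℝ)/((k:ℝ)+1)) ^ s * ((k:ℝ)+1) ^ (-(3:ℝ)/4) * f (k+1) * g l * h (k+1+l)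
      = ((1 + (l:ℝ)/((k:ℝ)+1)) ^ s * ((k:ℝ)+1) ^ (-(3:ℝ)/4)) *
          (f (k+1) * g l * h (k+1+l)) := by ring
    _ ≤ (((k:ℝ) + 1) ^ (-((s + 3/2) / 2)) * ((2 * (l:ℝ) + 3/2) ^ (s/2) *
          (2 * ((k:ℝ) + 1 + l) + 3/2) ^ (s/2))) * (f (k+1) * g l * h (k+1+l)) := by
        gcongr
    _ = _ := by push_cast; ring

theorem trilinear_discrete_convolution_estimate_general (s : ℝ) (hs0 : 0 < s) :
    ∃ C : ℝ, 0 < C ∧ ∀ f g h : ℕ → ℝ,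
      (∀ k, 0 ≤ f k) → (∀ l, 0 ≤ g l) → (∀ n, 0 ≤ h n) →
      (∑' (k : ℕ), ∑' (l : ℕ),
          ENNReal.ofReal ((1 + (l:ℝ)/((k:ℝ)+1)) ^ s * ((k:ℝ)+1) ^ (-(3:ℝ)/4) *
            f (k+1) * g l * h (k+1+l))) ≤
        ENNReal.ofReal C *
          (∑' (k : ℕ), ENNReal.ofReal (f k ^ 2)) ^ ((1:ℝ)/2) *
          (∑' (l : ℕ), ENNReal.ofReal ((2*(l:ℝ) + 3/2) ^ s * g l ^ 2)) ^ ((1:ℝ)/2) *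
          (∑' (n : ℕ), ENNReal.ofReal ((2*(n:ℝ) + 3/2) ^ s * h n ^ 2)) ^ ((1:ℝ)/2) := by
  have hp : 1 < s + 3/2 := by linarith
  set C₀ := ∑' k : ℕ, ((k:ℝ) + 1) ^ (-(s + 3/2))
  have hC₀ : 0 < C₀ :=
    (summable_nat_add_one_rpow_neg hp).tsum_pos (fun _ => by positivity) 0 (by positivity)
  refine ⟨C₀ ^ ((1:ℝ)/2), by positivity, fun f g h hf hg hh => ?_⟩
  set w : ℕ → ℝ≥0∞ := fun k => ENNReal.ofReal (((k:ℝ) + 1) ^ (-((s + 3/2) / 2)))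
  set G := hermitePowCoeff (s/2) g
  set H := hermitePowCoeff (s/2) h
  calc _ ≤ ∑' k, ∑' l, w k * ENNReal.ofReal (f (k+1)) * (G l * H (k+1+l)) :=
        ENNReal.tsum_le_tsum fun k => ENNReal.tsum_le_tsum fun l =>
          ofReal_convolution_term_le hs0.le hf hg hh k l
    _ ≤ (∑' k, w k * ENNReal.ofReal (f (k+1))) *
          ((∑' l, G l ^ 2) ^ ((1:ℝ)/2) * (∑' n, H n ^ 2) ^ ((1:ℝ)/2)) :=
        ENNReal.tsum_tsum_mul_shift_le _ _ _
    _ ≤ ((∑' k, w k ^ 2) ^ ((1:ℝ)/2) * (∑' k, ENNReal.ofReal (f k) ^ 2) ^ ((1:ℝ)/2)) *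
          ((∑' l, G l ^ 2) ^ ((1:ℝ)/2) * (∑' n, H n ^ 2) ^ ((1:ℝ)/2)) := by
        gcongr
        exact ENNReal.tsum_mul_comp_le_of_injective _ _ (add_left_injective 1)
    _ = _ := by
        rw [tsum_ofReal_nat_add_one_rpow_sq hp,
          ← ENNReal.ofReal_rpow_of_nonneg hC₀.le (by norm_num)]
        simp_rw [← ENNReal.ofReal_pow (hf _), G, H, hermitePowCoeff_half_sq (hg _),
          hermitePowCoeff_half_sq (hh _)]
        ring

theorem trilinear_discrete_convolution_estimate (s : ℝ) (hs0 : 0 < s) (hs1 : s < 1) :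
    ∃ C : ℝ, 0 < C ∧ ∀ f g h : ℕ → ℝ,
      (∀ k, 0 ≤ f k) → (∀ l, 0 ≤ g l) → (∀ n, 0 ≤ h n) →
      (∑' (k : ℕ), ∑' (l : ℕ),
          ENNReal.ofReal ((1 + (l:ℝ)/((k:ℝ)+1)) ^ s * ((k:ℝ)+1) ^ (-(3:ℝ)/4) *
            f (k+1) * g l * h (k+1+l))) ≤
        ENNReal.ofReal C *
          (∑' (k : ℕ), ENNReal.ofReal (f k ^ 2)) ^ ((1:ℝ)/2) *
          (∑' (l : ℕ), ENNReal.ofReal ((2*(l:ℝ) + 3/2) ^ s * g l ^ 2)) ^ ((1:ℝ)/2) *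
          (∑' (n : ℕ), ENNReal.ofReal ((2*(n:ℝ) + 3/2) ^ s * h n ^ 2)) ^ ((1:ℝ)/2) :=
  trilinear_discrete_convolution_estimate_general s hs0
end

section
/- Let 0 < s < 1 and let β : ℝ → ℝ be a measurable function such that for some constant c > 0 one has c·|θ|^(−1−2s) ≤ β(θ) ≤ c⁻¹·|θ|^(−1−2s) for all θ ∈ [−π/4, π/4] \ {0}. For each integer n ≥ 1 set λ_{2n} = ∫_{−π/4}^{π/4} β(θ)·(1 − (cos θ)^{2n} − (sin θ)^{2n}) dθ. Then there exists a constant C ≥ 1 such that for every integer k ≥ 2, C⁻¹·k^s ≤ λ_{2k} ≤ C·k^s. -/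
/-!
Write `D_k(θ) = 1 - cos^{2k} θ - sin^{2k} θ`. Bernoulli's inequality gives
`0 ≤ D_k ≤ min(1, k θ²)`, and for `k θ² ≥ 1`, `0 ≤ θ ≤ π/4` one has `D_k(θ) ≥ 1/28`.
Splitting at `a = k^{-1/2}`, the integrand is at most `c⁻¹ k θ^{1-2s}` on `(0, a)` and comparable
to `θ^{-1-2s}` on `[a, π/4]`, and both pieces integrate to a multiple of `a^{-2s} = k^s`.
Since `D_k` is even, the integral over `[-π/4, π/4]` is the sum of the one-sided integrals of
`β(θ) D_k(θ)` and `β(-θ) D_k(θ)` over `[0, π/4]`.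
-/

open Real MeasureTheory Set

noncomputable def trigDeficit (k : ℕ) (θ : ℝ) : ℝ := 1 - cos θ ^ (2 * k) - sin θ ^ (2 * k)

@[fun_prop]
lemma continuous_trigDeficit (k : ℕ) : Continuous (trigDeficit k) := by
  unfold trigDeficit
  fun_prop

lemma trigDeficit_neg (k : ℕ) (θ : ℝ) : trigDeficit k (-θ) = trigDeficit k θ := by
  simp [trigDeficit, (even_two_mul k).neg_pow]

lemma trigDeficit_nonneg {k : ℕ} (hk : k ≠ 0) (θ : ℝ) : 0 ≤ trigDeficit k θ := by
  rw [trigDeficit, pow_mul, pow_mul]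
  have hc := pow_le_of_le_one (sq_nonneg (cos θ)) (cos_sq_le_one θ) hk
  have hs := pow_le_of_le_one (sq_nonneg (sin θ)) (sin_sq_le_one θ) hk
  linarith [sin_sq_add_cos_sq θ]

lemma trigDeficit_le_one (k : ℕ) (θ : ℝ) : trigDeficit k θ ≤ 1 := by
  have hc := (even_two_mul k).pow_nonneg (cos θ)
  have hs := (even_two_mul k).pow_nonneg (sin θ)
  rw [trigDeficit]
  linarith

lemma trigDeficit_le_mul_sq (k : ℕ) (θ : ℝ) : trigDeficit k θ ≤ k * θ ^ 2 := by
  have hbern : 1 + k * -sin θ ^ 2 ≤ cos θ ^ (2 * k) := by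
    rw [pow_mul, cos_sq', sub_eq_add_neg]
    exact one_add_mul_le_pow (by linarith [sin_sq_le_one θ]) k
  have hs := (even_two_mul k).pow_nonneg (sin θ)
  have hsin := mul_le_mul_of_nonneg_left (sin_sq_le_sq (x := θ)) k.cast_nonneg
  rw [trigDeficit]
  linarith

lemma one_sub_pow_mul_one_add_mul_le_one {u : ℝ} (hu0 : 0 ≤ u) (hu1 : u ≤ 1) (k : ℕ) :
    (1 - u) ^ k * (1 + k * u) ≤ 1 :=
  calc (1 - u) ^ k * (1 + k * u) ≤ (1 - u) ^ k * (1 + u) ^ k := by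
        gcongr
        exact one_add_mul_le_pow (by linarith) k
    _ = (1 - u ^ 2) ^ k := by rw [← mul_pow]; ring
    _ ≤ 1 := pow_le_one₀ (by nlinarith) (by nlinarith)

lemma cos_pow_two_mul_le {k : ℕ} {θ : ℝ} (hθ0 : 0 ≤ θ) (hθ : θ ≤ π / 2)
    (hkθ : 1 ≤ k * θ ^ 2) :
    cos θ ^ (2 * k) ≤ 5 / 7 := by
  -- `(1 - sin² θ)^k ≤ 1 / (1 + k sin² θ)` and `k sin² θ ≥ 4 k θ² / π² ≥ 2 / 5`, as `π² < 10`.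
  have hsin : 4 / π ^ 2 * θ ^ 2 ≤ sin θ ^ 2 :=
    calc 4 / π ^ 2 * θ ^ 2 = (2 / π * θ) ^ 2 := by ring
      _ ≤ sin θ ^ 2 := pow_le_pow_left₀ (by positivity) (mul_le_sin hθ0 hθ) 2
  have hku : 2 / 5 ≤ k * sin θ ^ 2 := by
    have hπ : 2 / 5 ≤ 4 / π ^ 2 := by
      rw [div_le_div_iff₀ (by norm_num) (by positivity)]
      nlinarith [pi_lt_d2, pi_pos]
    calc (2 : ℝ) / 5 ≤ 4 / π ^ 2 * (k * θ ^ 2) :=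
          hπ.trans (le_mul_of_one_le_right (by positivity) hkθ)
      _ = k * (4 / π ^ 2 * θ ^ 2) := mul_left_comm _ _ _
      _ ≤ k * sin θ ^ 2 := mul_le_mul_of_nonneg_left hsin k.cast_nonneg
  have h := one_sub_pow_mul_one_add_mul_le_one (sq_nonneg (sin θ)) (sin_sq_le_one θ) k
  have h0 : 0 ≤ (1 - sin θ ^ 2) ^ k := pow_nonneg (by linarith [sin_sq_le_one θ]) k
  rw [pow_mul, cos_sq']
  nlinarith

lemma sin_pow_two_mul_le {k : ℕ} (hk : 2 ≤ k) {θ : ℝ} (hθ : |θ| ≤ π / 4) :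
    sin θ ^ (2 * k) ≤ 1 / 4 := by
  have hcos : 0 ≤ cos (2 * θ) := by
    apply cos_nonneg_of_mem_Icc
    constructor <;> linarith [abs_le.mp hθ]
  have hsin : sin θ ^ 2 ≤ 1 / 2 := by rw [sin_sq_eq_half_sub]; linarith
  calc sin θ ^ (2 * k) = (sin θ ^ 2) ^ k := pow_mul _ _ _
    _ ≤ (1 / 2) ^ k := by gcongr
    _ ≤ (1 / 2) ^ 2 := pow_le_pow_of_le_one (by norm_num) (by norm_num) hk
    _ = 1 / 4 := by norm_num

lemma le_trigDeficit {k : ℕ} (hk : 2 ≤ k) {θ : ℝ} (hθ0 : 0 ≤ θ) (hθ : θ ≤ π / 4)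
    (hkθ : 1 ≤ k * θ ^ 2) : 1 / 28 ≤ trigDeficit k θ := by
  have hc := cos_pow_two_mul_le hθ0 (by linarith [pi_pos]) hkθ
  have hs := sin_pow_two_mul_le hk (by rwa [abs_of_nonneg hθ0])
  rw [trigDeficit]
  linarith

lemma inv_sqrt_rpow_neg_two_mul {k : ℝ} (hk : 0 ≤ k) (s : ℝ) : (√k)⁻¹ ^ (-2 * s) = k ^ s := by
  rw [inv_rpow (sqrt_nonneg k), ← rpow_neg (sqrt_nonneg k), neg_mul, neg_neg,
    rpow_mul (sqrt_nonneg k), rpow_two, sq_sqrt hk]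

lemma inv_sqrt_le_pi_div_four {k : ℝ} (hk : 2 ≤ k) : (√k)⁻¹ ≤ π / 4 := by
  rw [inv_le_comm₀ (by positivity) (by positivity), inv_div,
    le_sqrt (by positivity) (by linarith)]
  calc (4 / π) ^ 2 ≤ (4 / 3) ^ 2 := by gcongr; exact pi_gt_three.le
    _ ≤ k := by linarith

lemma one_le_mul_sq_of_inv_sqrt_le {k θ : ℝ} (hk : 0 < k) (hθ : (√k)⁻¹ ≤ θ) : 1 ≤ k * θ ^ 2 := by
  have := pow_le_pow_left₀ (by positivity) hθ 2
  rw [inv_pow, sq_sqrt hk.le, inv_le_iff_one_le_mul₀' hk] at this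
  exact this

lemma pi_div_four_rpow_neg_two_mul_le {s k : ℝ} (hs : 0 ≤ s) (hk : 2 ≤ k) :
    (π / 4) ^ (-2 * s) ≤ (8 / 9) ^ s * k ^ s := by
  rw [← mul_rpow (by norm_num) (by linarith), rpow_mul (by positivity), rpow_neg (by positivity),
    rpow_two]
  gcongr
  rw [inv_le_iff_one_le_mul₀ (by positivity)]
  nlinarith [pi_gt_three]

lemma integral_rpow_neg_one_sub_two_mul {s a b : ℝ} (hs : s ≠ 0) (ha : 0 < a) (hb : 0 < b) :
    ∫ θ in a..b, θ ^ (-1 - 2 * s) = (a ^ (-2 * s) - b ^ (-2 * s)) / (2 * s) := by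
  rw [integral_rpow (Or.inr ⟨fun h => hs (by linarith), notMem_uIcc_of_lt ha hb⟩),
    show -1 - 2 * s + 1 = -2 * s by ring]
  field_simp
  ring

lemma integral_rpow_one_sub_two_mul {s a : ℝ} (hs : s < 1) :
    ∫ θ in (0 : ℝ)..a, θ ^ (1 - 2 * s) = a ^ (2 - 2 * s) / (2 - 2 * s) := by
  rw [integral_rpow (Or.inl (by linarith)), show 1 - 2 * s + 1 = 2 - 2 * s by ring,
    zero_rpow (by linarith), sub_zero]

lemma integral_le_of_le_rpow {F : ℝ → ℝ} {s a b A : ℝ} (hs0 : 0 < s) (hs1 : s < 1) (hA : 0 ≤ A)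
    (ha : 0 < a) (hab : a ≤ b) (hF : IntervalIntegrable F volume 0 b)
    (hF_near : ∀ θ ∈ Ioo 0 a, F θ ≤ A / a ^ 2 * θ ^ (1 - 2 * s))
    (hF_far : ∀ θ ∈ Icc a b, F θ ≤ A * θ ^ (-1 - 2 * s)) :
    ∫ θ in 0..b, F θ ≤ A * (1 / (2 - 2 * s) + 1 / (2 * s)) * a ^ (-2 * s) := by
  have hb : 0 < b := ha.trans_le hab
  have ha_mem : a ∈ uIcc 0 b := mem_uIcc_of_le ha.le hab
  have hF₁ : IntervalIntegrable F volume 0 a := hF.mono_set (uIcc_subset_uIcc_left ha_mem)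
  have hF₂ : IntervalIntegrable F volume a b := hF.mono_set (uIcc_subset_uIcc_right ha_mem)
  have h_near : ∫ θ in 0..a, F θ ≤ A / (2 - 2 * s) * a ^ (-2 * s) :=
    calc ∫ θ in 0..a, F θ ≤ ∫ θ in 0..a, A / a ^ 2 * θ ^ (1 - 2 * s) :=
          intervalIntegral.integral_mono_on_of_le_Ioo ha.le hF₁
            ((intervalIntegral.intervalIntegrable_rpow' (by linarith)).const_mul _) hF_near
      _ = A / (2 - 2 * s) * a ^ (-2 * s) := by
          rw [intervalIntegral.integral_const_mul, integral_rpow_one_sub_two_mul hs1,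
            show 2 - 2 * s = -2 * s + (2 : ℕ) by push_cast; ring, rpow_add_natCast ha.ne']
          field_simp
  have h_far : ∫ θ in a..b, F θ ≤ A / (2 * s) * a ^ (-2 * s) :=
    calc ∫ θ in a..b, F θ ≤ ∫ θ in a..b, A * θ ^ (-1 - 2 * s) :=
          intervalIntegral.integral_mono_on hab hF₂
            ((intervalIntegral.intervalIntegrable_rpow
              (Or.inr (notMem_uIcc_of_lt ha hb))).const_mul _) hF_far
      _ = A / (2 * s) * (a ^ (-2 * s) - b ^ (-2 * s)) := by
          rw [intervalIntegral.integral_const_mul,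
            integral_rpow_neg_one_sub_two_mul hs0.ne' ha hb]
          ring
      _ ≤ A / (2 * s) * a ^ (-2 * s) := by
          gcongr
          exact sub_le_self _ (rpow_nonneg (by linarith) _)
  rw [← intervalIntegral.integral_add_adjacent_intervals hF₁ hF₂]
  calc (∫ θ in 0..a, F θ) + ∫ θ in a..b, F θ
      ≤ A / (2 - 2 * s) * a ^ (-2 * s) + A / (2 * s) * a ^ (-2 * s) := add_le_add h_near h_far
    _ = A * (1 / (2 - 2 * s) + 1 / (2 * s)) * a ^ (-2 * s) := by ring

lemma le_integral_of_rpow_le {F : ℝ → ℝ} {s a b B : ℝ} (hs : s ≠ 0) (ha : 0 < a) (hab : a ≤ b)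
    (hF : IntervalIntegrable F volume 0 b) (hF_nonneg : ∀ θ ∈ Ioo 0 a, 0 ≤ F θ)
    (hF_far : ∀ θ ∈ Icc a b, B * θ ^ (-1 - 2 * s) ≤ F θ) :
    B * (a ^ (-2 * s) - b ^ (-2 * s)) / (2 * s) ≤ ∫ θ in 0..b, F θ := by
  have hb : 0 < b := ha.trans_le hab
  have ha_mem : a ∈ uIcc 0 b := mem_uIcc_of_le ha.le hab
  have hF₁ : IntervalIntegrable F volume 0 a := hF.mono_set (uIcc_subset_uIcc_left ha_mem)
  have hF₂ : IntervalIntegrable F volume a b := hF.mono_set (uIcc_subset_uIcc_right ha_mem)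
  have h_near : 0 ≤ ∫ θ in 0..a, F θ := by
    simpa using
      intervalIntegral.integral_mono_on_of_le_Ioo ha.le intervalIntegrable_const hF₁ hF_nonneg
  have h_far : B * (a ^ (-2 * s) - b ^ (-2 * s)) / (2 * s) ≤ ∫ θ in a..b, F θ :=
    calc B * (a ^ (-2 * s) - b ^ (-2 * s)) / (2 * s) = ∫ θ in a..b, B * θ ^ (-1 - 2 * s) := by
          rw [intervalIntegral.integral_const_mul, integral_rpow_neg_one_sub_two_mul hs ha hb]
          ring
      _ ≤ ∫ θ in a..b, F θ := intervalIntegral.integral_mono_on hab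
            ((intervalIntegral.intervalIntegrable_rpow
              (Or.inr (notMem_uIcc_of_lt ha hb))).const_mul _) hF₂ hF_far
  rw [← intervalIntegral.integral_add_adjacent_intervals hF₁ hF₂]
  linarith

lemma intervalIntegrable_of_norm_le_rpow {G : ℝ → ℝ} {r b M : ℝ} (hr : -1 < r) (hb : 0 ≤ b)
    (hG : AEStronglyMeasurable G) (hle : ∀ θ ∈ Ioc 0 b, ‖G θ‖ ≤ M * θ ^ r) :
    IntervalIntegrable G volume 0 b :=
  ((intervalIntegral.intervalIntegrable_rpow' hr).const_mul M).mono_fun' hG.restrict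
    (ae_restrict_of_forall_mem measurableSet_uIoc (by rwa [uIoc_of_le hb]))

lemma integral_neg_to_eq_add_comp_neg {f : ℝ → ℝ} {b : ℝ} (hf : IntervalIntegrable f volume 0 b)
    (hf_neg : IntervalIntegrable (fun x => f (-x)) volume 0 b) :
    ∫ x in -b..b, f x = (∫ x in 0..b, f x) + ∫ x in 0..b, f (-x) := by
  have hf_left : IntervalIntegrable f volume (-b) 0 := by
    simpa using (IntervalIntegrable.iff_comp_neg (f := fun x => f (-x))).mp hf_neg |>.symm
  rw [← intervalIntegral.integral_add_adjacent_intervals hf_left hf, add_comm,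
    intervalIntegral.integral_comp_neg, neg_zero]

lemma exists_one_le_inv_mul_le_and_le_mul {ι : Type*} {P : ι → Prop} {x y : ι → ℝ} {L U : ℝ}
    (hL : 0 < L) (hx : ∀ i, P i → 0 ≤ x i) (h : ∀ i, P i → L * x i ≤ y i ∧ y i ≤ U * x i) :
    ∃ C, 1 ≤ C ∧ ∀ i, P i → C⁻¹ * x i ≤ y i ∧ y i ≤ C * x i := by
  refine ⟨max 1 (max U L⁻¹), le_max_left _ _, fun i hi => ⟨?_, ?_⟩⟩
  · have hC : (max 1 (max U L⁻¹))⁻¹ ≤ L :=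
      inv_le_of_inv_le₀ hL ((le_max_right _ _).trans (le_max_right _ _))
    exact (mul_le_mul_of_nonneg_right hC (hx i hi)).trans (h i hi).1
  · exact (h i hi).2.trans
      (mul_le_mul_of_nonneg_right ((le_max_left _ _).trans (le_max_right _ _)) (hx i hi))

lemma mul_trigDeficit_le {x s A θ : ℝ} {k : ℕ} (hk : k ≠ 0) (hθ : 0 < θ) (hx0 : 0 ≤ x)
    (hx : x ≤ A * θ ^ (-1 - 2 * s)) :
    x * trigDeficit k θ ≤ A * θ ^ (-1 - 2 * s) ∧ x * trigDeficit k θ ≤ A * k * θ ^ (1 - 2 * s) := by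
  have hD0 := trigDeficit_nonneg hk θ
  constructor
  · exact (mul_le_of_le_one_right hx0 (trigDeficit_le_one k θ)).trans hx
  · calc x * trigDeficit k θ ≤ A * θ ^ (-1 - 2 * s) * (k * θ ^ 2) :=
          mul_le_mul hx (trigDeficit_le_mul_sq k θ) hD0 (hx0.trans hx)
      _ = A * k * θ ^ (1 - 2 * s) := by
          rw [show 1 - 2 * s = -1 - 2 * s + (2 : ℕ) by push_cast; ring, rpow_add_natCast hθ.ne']
          ring

section OneSided

variable {ψ : ℝ → ℝ} {s : ℝ} {k : ℕ}

lemma intervalIntegrable_mul_trigDeficit {A : ℝ} (hs1 : s < 1) (hψm : Measurable ψ)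
    (hψ : ∀ θ ∈ Ioc 0 (π / 4), 0 ≤ ψ θ ∧ ψ θ ≤ A * θ ^ (-1 - 2 * s)) (hk : k ≠ 0) :
    IntervalIntegrable (fun θ => ψ θ * trigDeficit k θ) volume 0 (π / 4) := by
  refine intervalIntegrable_of_norm_le_rpow (r := 1 - 2 * s) (M := A * k) (by linarith)
    (by positivity) (hψm.mul (by fun_prop)).aestronglyMeasurable fun θ hθ => ?_
  rw [norm_of_nonneg (mul_nonneg (hψ θ hθ).1 (trigDeficit_nonneg hk θ))]
  exact (mul_trigDeficit_le hk hθ.1 (hψ θ hθ).1 (hψ θ hθ).2).2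

lemma integral_mul_trigDeficit_le {A : ℝ} (hs0 : 0 < s) (hs1 : s < 1) (hA : 0 ≤ A)
    (hψ : ∀ θ ∈ Ioc 0 (π / 4), 0 ≤ ψ θ ∧ ψ θ ≤ A * θ ^ (-1 - 2 * s))
    (hint : IntervalIntegrable (fun θ => ψ θ * trigDeficit k θ) volume 0 (π / 4)) (hk : 2 ≤ k) :
    ∫ θ in 0..π / 4, ψ θ * trigDeficit k θ ≤ A * (1 / (2 - 2 * s) + 1 / (2 * s)) * (k : ℝ) ^ s := by
  have hk' : (2 : ℝ) ≤ k := by exact_mod_cast hk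
  rw [← inv_sqrt_rpow_neg_two_mul k.cast_nonneg]
  refine integral_le_of_le_rpow hs0 hs1 hA (by positivity) (inv_sqrt_le_pi_div_four hk') hint
    (fun θ hθ => ?_) (fun θ hθ => ?_)
  · have hθ' : θ ∈ Ioc 0 (π / 4) := ⟨hθ.1, hθ.2.le.trans (inv_sqrt_le_pi_div_four hk')⟩
    rw [inv_pow, sq_sqrt k.cast_nonneg, div_inv_eq_mul]
    exact (mul_trigDeficit_le (by omega) hθ.1 (hψ θ hθ').1 (hψ θ hθ').2).2
  · have hθ0 : 0 < θ := lt_of_lt_of_le (by positivity) hθ.1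
    exact (mul_trigDeficit_le (by omega) hθ0 (hψ θ ⟨hθ0, hθ.2⟩).1 (hψ θ ⟨hθ0, hθ.2⟩).2).1

lemma le_integral_mul_trigDeficit {B : ℝ} (hs0 : 0 < s) (hB : 0 ≤ B)
    (hψ : ∀ θ ∈ Ioc 0 (π / 4), B * θ ^ (-1 - 2 * s) ≤ ψ θ)
    (hint : IntervalIntegrable (fun θ => ψ θ * trigDeficit k θ) volume 0 (π / 4)) (hk : 2 ≤ k) :
    B / 28 * (1 - (8 / 9) ^ s) / (2 * s) * (k : ℝ) ^ s ≤
      ∫ θ in 0..π / 4, ψ θ * trigDeficit k θ := by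
  have hk' : (2 : ℝ) ≤ k := by exact_mod_cast hk
  have ha := inv_sqrt_le_pi_div_four hk'
  have hψ0 : ∀ θ ∈ Ioc 0 (π / 4), 0 ≤ ψ θ := fun θ hθ =>
    (mul_nonneg hB (rpow_nonneg hθ.1.le _)).trans (hψ θ hθ)
  have hlow := le_integral_of_rpow_le (B := B / 28) hs0.ne' (by positivity) ha hint
    (fun θ hθ => mul_nonneg (hψ0 θ ⟨hθ.1, hθ.2.le.trans ha⟩) (trigDeficit_nonneg (by omega) θ))
    (fun θ hθ => ?_)
  · rw [inv_sqrt_rpow_neg_two_mul k.cast_nonneg] at hlow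
    calc B / 28 * (1 - (8 / 9) ^ s) / (2 * s) * (k : ℝ) ^ s
        = B / 28 * ((k : ℝ) ^ s - (8 / 9) ^ s * (k : ℝ) ^ s) / (2 * s) := by ring
      _ ≤ B / 28 * ((k : ℝ) ^ s - (π / 4) ^ (-2 * s)) / (2 * s) := by
          gcongr
          exact pi_div_four_rpow_neg_two_mul_le hs0.le hk'
      _ ≤ _ := hlow
  · have hθ0 : 0 < θ := lt_of_lt_of_le (by positivity) hθ.1
    have hD := le_trigDeficit hk hθ0.le hθ.2
      (one_le_mul_sq_of_inv_sqrt_le (by positivity) hθ.1)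
    calc B / 28 * θ ^ (-1 - 2 * s) = B * θ ^ (-1 - 2 * s) * (1 / 28) := by ring
      _ ≤ ψ θ * trigDeficit k θ :=
          mul_le_mul (hψ θ ⟨hθ0, hθ.2⟩) hD (by norm_num) (hψ0 θ ⟨hθ0, hθ.2⟩)

lemma integral_mul_trigDeficit_bounds {c : ℝ} (hs0 : 0 < s) (hs1 : s < 1) (hc : 0 < c)
    (hψm : Measurable ψ)
    (hψ : ∀ θ ∈ Ioc 0 (π / 4), c * θ ^ (-1 - 2 * s) ≤ ψ θ ∧ ψ θ ≤ c⁻¹ * θ ^ (-1 - 2 * s))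
    (hk : 2 ≤ k) :
    IntervalIntegrable (fun θ => ψ θ * trigDeficit k θ) volume 0 (π / 4) ∧
    c / 28 * (1 - (8 / 9) ^ s) / (2 * s) * (k : ℝ) ^ s ≤ ∫ θ in 0..π / 4, ψ θ * trigDeficit k θ ∧
    ∫ θ in 0..π / 4, ψ θ * trigDeficit k θ ≤
      c⁻¹ * (1 / (2 - 2 * s) + 1 / (2 * s)) * (k : ℝ) ^ s := by
  have hψ' : ∀ θ ∈ Ioc 0 (π / 4), 0 ≤ ψ θ ∧ ψ θ ≤ c⁻¹ * θ ^ (-1 - 2 * s) := fun θ hθ =>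
    ⟨(mul_nonneg hc.le (rpow_nonneg hθ.1.le _)).trans (hψ θ hθ).1, (hψ θ hθ).2⟩
  have hint := intervalIntegrable_mul_trigDeficit hs1 hψm hψ' (by omega : k ≠ 0)
  exact ⟨hint, le_integral_mul_trigDeficit hs0 hc.le (fun θ hθ => (hψ θ hθ).1) hint hk,
    integral_mul_trigDeficit_le hs0 hs1 (inv_nonneg.2 hc.le) hψ' hint hk⟩

end OneSided

theorem eigenvalue_spectral_asymptotics
    (s : ℝ) (hs0 : 0 < s) (hs1 : s < 1) (β : ℝ → ℝ) (hβmeas : Measurable β)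
    (c : ℝ) (hc : 0 < c)
    (hβbound : ∀ θ ∈ Set.Icc (-(π/4)) (π/4), θ ≠ 0 →
      c * |θ| ^ (-(1:ℝ) - 2*s) ≤ β θ ∧ β θ ≤ c⁻¹ * |θ| ^ (-(1:ℝ) - 2*s))
    (lam : ℕ → ℝ)
    (hlam : ∀ n : ℕ, 1 ≤ n →
      lam n = ∫ θ in (-(π/4))..(π/4),
        β θ * (1 - Real.cos θ ^ (2*n) - Real.sin θ ^ (2*n))) :
    ∃ C : ℝ, 1 ≤ C ∧ ∀ k : ℕ, 2 ≤ k →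
      C⁻¹ * (k:ℝ) ^ s ≤ lam k ∧ lam k ≤ C * (k:ℝ) ^ s := by
  have hβ_right : ∀ θ ∈ Ioc 0 (π / 4),
      c * θ ^ (-1 - 2 * s) ≤ β θ ∧ β θ ≤ c⁻¹ * θ ^ (-1 - 2 * s) := fun θ hθ => by
    simpa [abs_of_pos hθ.1] using
      hβbound θ ⟨by linarith [hθ.1, pi_pos], hθ.2⟩ hθ.1.ne'
  have hβ_left : ∀ θ ∈ Ioc 0 (π / 4),
      c * θ ^ (-1 - 2 * s) ≤ β (-θ) ∧ β (-θ) ≤ c⁻¹ * θ ^ (-1 - 2 * s) := fun θ hθ => by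
    simpa [abs_of_pos hθ.1] using
      hβbound (-θ) ⟨by linarith [hθ.2], by linarith [hθ.1, pi_pos]⟩ (neg_ne_zero.2 hθ.1.ne')
  have hε : 0 < 1 - (8 / 9 : ℝ) ^ s := sub_pos.2 (rpow_lt_one (by norm_num) (by norm_num) hs0)
  refine exists_one_le_inv_mul_le_and_le_mul (L := 2 * (c / 28 * (1 - (8 / 9) ^ s) / (2 * s)))
    (U := 2 * (c⁻¹ * (1 / (2 - 2 * s) + 1 / (2 * s)))) (by positivity)
    (fun k _ => rpow_nonneg k.cast_nonneg s) fun k hk => ?_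
  obtain ⟨hint₁, hL₁, hU₁⟩ := integral_mul_trigDeficit_bounds hs0 hs1 hc hβmeas hβ_right hk
  obtain ⟨hint₂, hL₂, hU₂⟩ := integral_mul_trigDeficit_bounds (ψ := fun θ => β (-θ))
    hs0 hs1 hc (hβmeas.comp measurable_neg) hβ_left hk
  have hsplit : lam k = (∫ θ in 0..π / 4, β θ * trigDeficit k θ) +
      ∫ θ in 0..π / 4, β (-θ) * trigDeficit k θ := by
    have h := integral_neg_to_eq_add_comp_neg hint₁ (by simpa only [trigDeficit_neg] using hint₂)
    simp only [trigDeficit_neg] at h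
    exact (hlam k (by omega)).trans h
  constructor <;> linarith
end

section
/- Let 0 < s < 1 and let β : ℝ → ℝ be a measurable function such that for some constant c > 0 one has c·|θ|^(−1−2s) ≤ β(θ) ≤ c⁻¹·|θ|^(−1−2s) for all θ ∈ [−π/4, π/4] \ {0}. For each integer n ≥ 1 set λ_{2n} = ∫_{−π/4}^{π/4} β(θ)·(1 − (cos θ)^{2n} − (sin θ)^{2n}) dθ, and for integers k, l ≥ 1 set c_{k,l} = √((2k+2l+1)/((2k+1)(2l+1)))·√(C(2k+2l, 2k))·∫_{−π/4}^{π/4} β(θ)·(sin θ)^{2k}·(cos θ)^{2l} dθ. Let (b_n)_{n≥0} be differentiable functions on [0, ∞) with b_0 ≡ 0, b_1 ≡ 0, satisfying for all n ≥ 2 and t ≥ 0 the equations b_n'(t) + λ_{2n}·b_n(t) = Σ_{k+l=n, k≥1, l≥1} c_{k,l}·b_k(t)·b_l(t). If for some integer n ≥ 2 one has b_k(0) = 0 for all 2 ≤ k ≤ n−1, then b_k(t) = 0 for all t ≥ 0 and 2 ≤ k ≤ n−1, and b_n(t) = b_n(0)·e^{−λ_{2n}t} for all t ≥ 0. -/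
open Real MeasureTheory

/-!
The system is triangular: the quadratic term in the equation for `b n` only involves the modes
`b k` with `1 ≤ k < n`. By strong induction each `b k` with `2 ≤ k < n` therefore solves
`b k' = -λ b k` with zero initial datum and vanishes, after which `b n` solves the same linear
equation and decays exactly like `exp (-λ t)`.
-/

theorem eq_mul_exp_of_hasDerivWithinAt_Ici {a : ℝ} {f f' : ℝ → ℝ}
    (hf : ∀ t, 0 ≤ t → HasDerivWithinAt f (f' t) (Set.Ici 0) t)
    (hf' : ∀ t, 0 ≤ t → f' t = -a * f t) {t : ℝ} (ht : 0 ≤ t) :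
    f t = f 0 * exp (-a * t) := by
  -- `u ↦ exp (a u) f u` has vanishing right derivative, hence is constant.
  set g : ℝ → ℝ := fun u => exp (a * u) * f u
  have hg_deriv : ∀ u ∈ Set.Ico 0 t, HasDerivWithinAt g 0 (Set.Ici u) u := by
    intro u hu
    have hexp : HasDerivAt (fun u => exp (a * u)) (exp (a * u) * a) u := by
      simpa using ((hasDerivAt_id u).const_mul a).exp
    have h := hexp.hasDerivWithinAt.mul ((hf u hu.1).mono (Set.Ici_subset_Ici.mpr hu.1))
    rwa [hf' u hu.1, show exp (a * u) * a * f u + exp (a * u) * (-a * f u) = 0 by ring] at h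
  have hg_cont : ContinuousOn g (Set.Icc 0 t) :=
    (continuous_exp.comp (continuous_const.mul continuous_id)).continuousOn.mul
      fun u hu => (hf u hu.1).continuousWithinAt.mono fun _ hx => hx.1
  have hg : g t = g 0 :=
    constant_of_has_deriv_right_zero hg_cont hg_deriv t (Set.right_mem_Icc.mpr ht)
  simp only [g, mul_zero, exp_zero, one_mul] at hg
  rw [← hg, neg_mul, exp_neg, mul_comm (exp (a * t)), mul_assoc, mul_inv_cancel₀ (exp_ne_zero _),
    mul_one]

section TriangularSystem

variable {lam : ℕ → ℝ} {cc : ℕ → ℕ → ℝ} {b b' : ℕ → ℝ → ℝ}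

theorem sum_Icc_mul_eq_zero_of_forall_lt_eq_zero {n : ℕ} {t : ℝ}
    (hlow : ∀ j, 1 ≤ j → j < n → b j t = 0) :
    ∑ k ∈ Finset.Icc 1 (n - 1), cc k (n - k) * b k t * b (n - k) t = 0 :=
  Finset.sum_eq_zero fun k hk => by
    obtain ⟨hk1, hkn⟩ := Finset.mem_Icc.mp hk
    rw [hlow k hk1 (by omega), mul_zero, zero_mul]

theorem eq_mul_exp_of_forall_lt_eq_zero
    (hderiv : ∀ n t, 0 ≤ t → HasDerivWithinAt (b n) (b' n t) (Set.Ici 0) t)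
    (hode : ∀ n, 2 ≤ n → ∀ t, 0 ≤ t →
      b' n t + lam n * b n t = ∑ k ∈ Finset.Icc 1 (n - 1), cc k (n - k) * b k t * b (n - k) t)
    {n : ℕ} (hn : 2 ≤ n) (hlow : ∀ j, 1 ≤ j → j < n → ∀ t, 0 ≤ t → b j t = 0)
    {t : ℝ} (ht : 0 ≤ t) :
    b n t = b n 0 * exp (-lam n * t) := by
  refine eq_mul_exp_of_hasDerivWithinAt_Ici (hderiv n) (fun u hu => ?_) ht
  have h := hode n hn u hu
  rw [sum_Icc_mul_eq_zero_of_forall_lt_eq_zero fun j hj1 hjn => hlow j hj1 hjn u hu] at h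
  linarith

end TriangularSystem

theorem single_mode_exact_decay_general
    (lam : ℕ → ℝ)
    (cc : ℕ → ℕ → ℝ)
    (b b' : ℕ → ℝ → ℝ)
    (hderiv : ∀ n : ℕ, ∀ t : ℝ, 0 ≤ t → HasDerivWithinAt (b n) (b' n t) (Set.Ici 0) t)
    (hb1 : ∀ t : ℝ, b 1 t = 0)
    (hode : ∀ n : ℕ, 2 ≤ n → ∀ t : ℝ, 0 ≤ t →
      b' n t + lam n * b n t =
        ∑ k ∈ Finset.Icc 1 (n-1), cc k (n-k) * b k t * b (n-k) t)
    (n : ℕ) (hn : 2 ≤ n)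
    (hinit : ∀ k : ℕ, 2 ≤ k → k < n → b k 0 = 0) :
    (∀ k : ℕ, 2 ≤ k → k < n → ∀ t : ℝ, 0 ≤ t → b k t = 0) ∧
      (∀ t : ℝ, 0 ≤ t → b n t = b n 0 * Real.exp (-(lam n) * t)) := by
  have hlow : ∀ k, 1 ≤ k → k < n → ∀ t, 0 ≤ t → b k t = 0 := by
    intro k
    induction k using Nat.strong_induction_on with
    | _ k ih =>
      intro hk1 hkn t ht
      rcases hk1.eq_or_lt with rfl | hk2
      · exact hb1 t
      · rw [eq_mul_exp_of_forall_lt_eq_zero hderiv hode hk2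
          (fun j hj1 hjk => ih j hjk hj1 (hjk.trans hkn)) ht, hinit k hk2 hkn, zero_mul]
  exact ⟨fun k hk2 => hlow k (by omega),
    fun t ht => eq_mul_exp_of_forall_lt_eq_zero hderiv hode hn hlow ht⟩

theorem single_mode_exact_decay
    (s : ℝ) (hs0 : 0 < s) (hs1 : s < 1) (β : ℝ → ℝ) (hβmeas : Measurable β)
    (c : ℝ) (hc : 0 < c)
    (hβbound : ∀ θ ∈ Set.Icc (-(π/4)) (π/4), θ ≠ 0 →
      c * |θ| ^ (-(1:ℝ) - 2*s) ≤ β θ ∧ β θ ≤ c⁻¹ * |θ| ^ (-(1:ℝ) - 2*s))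
    (lam : ℕ → ℝ)
    (hlam : ∀ n : ℕ, 1 ≤ n →
      lam n = ∫ θ in (-(π/4))..(π/4),
        β θ * (1 - Real.cos θ ^ (2*n) - Real.sin θ ^ (2*n)))
    (cc : ℕ → ℕ → ℝ)
    (hcc : ∀ k l : ℕ, 1 ≤ k → 1 ≤ l →
      cc k l = Real.sqrt ((2*(k:ℝ) + 2*(l:ℝ) + 1) / ((2*(k:ℝ) + 1) * (2*(l:ℝ) + 1))) *
        Real.sqrt (((2*k + 2*l).choose (2*k) : ℝ)) *
        ∫ θ in (-(π/4))..(π/4), β θ * Real.sin θ ^ (2*k) * Real.cos θ ^ (2*l))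
    (b b' : ℕ → ℝ → ℝ)
    (hderiv : ∀ n : ℕ, ∀ t : ℝ, 0 ≤ t → HasDerivWithinAt (b n) (b' n t) (Set.Ici 0) t)
    (hb0 : ∀ t : ℝ, b 0 t = 0) (hb1 : ∀ t : ℝ, b 1 t = 0)
    (hode : ∀ n : ℕ, 2 ≤ n → ∀ t : ℝ, 0 ≤ t →
      b' n t + lam n * b n t =
        ∑ k ∈ Finset.Icc 1 (n-1), cc k (n-k) * b k t * b (n-k) t)
    (n : ℕ) (hn : 2 ≤ n)
    (hinit : ∀ k : ℕ, 2 ≤ k → k < n → b k 0 = 0) :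
    (∀ k : ℕ, 2 ≤ k → k < n → ∀ t : ℝ, 0 ≤ t → b k t = 0) ∧
      (∀ t : ℝ, 0 ≤ t → b n t = b n 0 * Real.exp (-(lam n) * t)) :=
  single_mode_exact_decay_general lam cc b b' hderiv hb1 hode n hn hinit
end

section
/- Let 0 < s < 1 and let β : ℝ → ℝ be a measurable function such that for some constant c > 0 one has c·|θ|^(−1−2s) ≤ β(θ) ≤ c⁻¹·|θ|^(−1−2s) for all θ ∈ [−π/4, π/4] \ {0}. For each integer n ≥ 1 set λ_{2n} = ∫_{−π/4}^{π/4} β(θ)·(1 − (cos θ)^{2n} − (sin θ)^{2n}) dθ, and for integers k, l ≥ 1 set c_{k,l} = √((2k+2l+1)/((2k+1)(2l+1)))·√(C(2k+2l, 2k))·∫_{−π/4}^{π/4} β(θ)·(sin θ)^{2k}·(cos θ)^{2l} dθ. Let (b_n)_{n≥0} be differentiable functions on [0, ∞) with b_0 ≡ 0, b_1 ≡ 0, satisfying for all n ≥ 2 and t ≥ 0 the equations b_n'(t) + λ_{2n}·b_n(t) = Σ_{k+l=n, k≥1, l≥1} c_{k,l}·b_k(t)·b_l(t). Then for every n ≥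 2 there exist real coefficients γ_{(j_1,…,j_k)}, indexed by the finitely many tuples (j_1,…,j_k) of integers with 1 ≤ k ≤ n, j_i ≥ 2 for each i, and j_1 + ⋯ + j_k = n, such that for all t ≥ 0, b_n(t) = Σ_{(j_1,…,j_k)} γ_{(j_1,…,j_k)}·e^{−(λ_{2j_1} + λ_{2j_2} + ⋯ + λ_{2j_k})t}. -/
/-!
Write `x = cos² θ`, `y = sin² θ`. For `a, b ≥ 2` the angular weights `w_m = 1 - x^m - y^m` satisfy
`w_a + w_b - w_{a+b} = (1 - x^a)(1 - x^b) + (1 - y^a)(1 - y^b) - 1 ≥ 2x²y²`,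
so positivity of `β` makes `λ` strictly subadditive on `{n ≥ 2}`. Hence every rate
`λ_{j₁} + ⋯ + λ_{j_k}` with `k ≥ 2`, `j_i ≥ 2` and `j₁ + ⋯ + j_k = n` is strictly larger
than `λ_n`.

By strong induction, the right-hand side of the `n`-th equation only involves `b_k b_{n-k}` with
`2 ≤ k, n - k`, so it is a sum of exponentials whose rates are indexed by concatenations of
lists, all of length at least two. These rates are non-resonant with `λ_n`, so the linear
equation for `b_n` is solved by a particular exponential sum plus a multiple of `e^{-λ_n t}`.
-/

open Real MeasureTheory

lemma intervalIntegrable_of_norm_le_mul_abs_rpow {f : ℝ → ℝ} {a b r C : ℝ} (hr : -1 < r)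
    (hf : AEStronglyMeasurable f) (hle : ∀ θ ∈ Set.uIcc a b, θ ≠ 0 → ‖f θ‖ ≤ C * |θ| ^ r) :
    IntervalIntegrable f volume a b := by
  refine ((intervalIntegrable_abs_rpow hr a b).const_mul C).mono_fun' hf.restrict ?_
  filter_upwards [ae_restrict_of_ae (Measure.ae_ne volume 0),
    ae_restrict_mem measurableSet_uIoc] with θ hθ0 hθ
  exact hle θ (Set.uIoc_subset_uIcc hθ) hθ0

noncomputable def angularWeight (m : ℕ) (θ : ℝ) : ℝ := 1 - cos θ ^ (2 * m) - sin θ ^ (2 * m)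

lemma angularWeight_eq (m : ℕ) (θ : ℝ) :
    angularWeight m θ = 1 - (cos θ ^ 2) ^ m - (sin θ ^ 2) ^ m := by
  simp only [angularWeight, pow_mul]

lemma angularWeight_nonneg {m : ℕ} (hm : 1 ≤ m) (θ : ℝ) : 0 ≤ angularWeight m θ := by
  have hc : (cos θ ^ 2) ^ m ≤ cos θ ^ 2 :=
    pow_le_of_le_one (sq_nonneg _) (cos_sq_le_one θ) (by omega)
  have hs : (sin θ ^ 2) ^ m ≤ sin θ ^ 2 :=
    pow_le_of_le_one (sq_nonneg _) (sin_sq_le_one θ) (by omega)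
  rw [angularWeight_eq]
  linarith [sin_sq_add_cos_sq θ]

lemma angularWeight_le (m : ℕ) (θ : ℝ) : angularWeight m θ ≤ m * θ ^ 2 := by
  have bernoulli : 1 - m * sin θ ^ 2 ≤ (cos θ ^ 2) ^ m := by
    rw [cos_sq']
    simpa [sub_eq_add_neg] using
      one_add_mul_le_pow (a := -sin θ ^ 2) (by nlinarith [sin_sq_le_one θ]) m
  have hs : 0 ≤ (sin θ ^ 2) ^ m := by positivity
  have hsθ : m * sin θ ^ 2 ≤ m * θ ^ 2 := mul_le_mul_of_nonneg_left sin_sq_le_sq m.cast_nonneg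
  rw [angularWeight_eq]
  linarith

lemma angularWeight_apply_zero {m : ℕ} (hm : 1 ≤ m) : angularWeight m 0 = 0 := by
  simp [angularWeight, zero_pow (show 2 * m ≠ 0 by omega)]

lemma two_mul_sq_mul_sq_add_le {x y : ℝ} (hx : 0 ≤ x) (hy : 0 ≤ y) (hxy : x + y = 1)
    {a b : ℕ} (ha : 2 ≤ a) (hb : 2 ≤ b) :
    (1 - x ^ (a + b) - y ^ (a + b)) + 2 * x ^ 2 * y ^ 2 ≤
      (1 - x ^ a - y ^ a) + (1 - x ^ b - y ^ b) := by
  have hx1 : x ≤ 1 := by linarith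
  have hy1 : y ≤ 1 := by linarith
  have hxa : 1 - x ^ 2 ≤ 1 - x ^ a := by linarith [pow_le_pow_of_le_one hx hx1 ha]
  have hxb : 1 - x ^ 2 ≤ 1 - x ^ b := by linarith [pow_le_pow_of_le_one hx hx1 hb]
  have hya : 1 - y ^ 2 ≤ 1 - y ^ a := by linarith [pow_le_pow_of_le_one hy hy1 ha]
  have hyb : 1 - y ^ 2 ≤ 1 - y ^ b := by linarith [pow_le_pow_of_le_one hy hy1 hb]
  have hx2 : 0 ≤ 1 - x ^ 2 := by nlinarith
  have hy2 : 0 ≤ 1 - y ^ 2 := by nlinarith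
  have hdefect : (1 - x ^ a - y ^ a) + (1 - x ^ b - y ^ b) - (1 - x ^ (a + b) - y ^ (a + b)) =
      (1 - x ^ a) * (1 - x ^ b) + (1 - y ^ a) * (1 - y ^ b) - 1 := by ring
  have hsquares :
      (1 - x ^ 2) * (1 - x ^ 2) + (1 - y ^ 2) * (1 - y ^ 2) - 1 = 2 * x ^ 2 * y ^ 2 := by
    obtain rfl : y = 1 - x := by linarith
    ring
  nlinarith [mul_le_mul hxa hxb hx2 (by linarith), mul_le_mul hya hyb hy2 (by linarith)]

lemma angularWeight_add_le {a b : ℕ} (ha : 2 ≤ a) (hb : 2 ≤ b) (θ : ℝ) :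
    angularWeight (a + b) θ + 2 * (cos θ ^ 2) ^ 2 * (sin θ ^ 2) ^ 2 ≤
      angularWeight a θ + angularWeight b θ := by
  simp only [angularWeight_eq]
  exact two_mul_sq_mul_sq_add_le (sq_nonneg _) (sq_nonneg _) (cos_sq_add_sin_sq θ) ha hb

lemma intervalIntegrable_mul_angularWeight {β : ℝ → ℝ} {a b r C : ℝ}
    (hβmeas : Measurable β) (hr : -3 < r)
    (hβ : ∀ θ ∈ Set.uIcc a b, θ ≠ 0 → 0 ≤ β θ ∧ β θ ≤ C * |θ| ^ r)
    {m : ℕ} (hm : 1 ≤ m) :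
    IntervalIntegrable (fun θ => β θ * angularWeight m θ) volume a b := by
  have hw : Measurable (angularWeight m) := by unfold angularWeight; fun_prop
  refine intervalIntegrable_of_norm_le_mul_abs_rpow (C := C * m) (by linarith : -1 < r + 2)
    (hβmeas.mul hw).aestronglyMeasurable fun θ hθ hθ0 => ?_
  obtain ⟨hβ0, hβC⟩ := hβ θ hθ hθ0
  have hθ2 : θ ^ 2 = |θ| ^ (2 : ℝ) := by rw [rpow_two, sq_abs]
  calc ‖β θ * angularWeight m θ‖ = β θ * angularWeight m θ := by
        rw [Real.norm_eq_abs, abs_of_nonneg (mul_nonneg hβ0 (angularWeight_nonneg hm θ))]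
    _ ≤ C * |θ| ^ r * (m * |θ| ^ (2 : ℝ)) := by
        rw [← hθ2]
        exact mul_le_mul hβC (angularWeight_le m θ) (angularWeight_nonneg hm θ)
          (hβ0.trans hβC)
    _ = C * m * |θ| ^ (r + 2) := by
        rw [rpow_add (abs_pos.mpr hθ0)]
        ring

theorem integral_mul_angularWeight_add_lt {β : ℝ → ℝ} {lam : ℕ → ℝ} {R : ℝ} (hR : 0 < R)
    (hRπ : R ≤ π / 2) (hβpos : ∀ θ ∈ Set.Icc (-R) R, θ ≠ 0 → 0 < β θ)
    (hint : ∀ m, 1 ≤ m → IntervalIntegrable (fun θ => β θ * angularWeight m θ) volume (-R) R)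
    (hlam : ∀ n, 1 ≤ n → lam n = ∫ θ in (-R)..R, β θ * angularWeight n θ)
    {a b : ℕ} (ha : 2 ≤ a) (hb : 2 ≤ b) : lam (a + b) < lam a + lam b := by
  set φ : ℝ → ℝ := fun θ =>
    β θ * angularWeight a θ + β θ * angularWeight b θ - β θ * angularWeight (a + b) θ
  have hφint : IntervalIntegrable φ volume (-R) R :=
    ((hint a (by omega)).add (hint b (by omega))).sub (hint (a + b) (by omega))
  have hφ : ∫ θ in (-R)..R, φ θ = lam a + lam b - lam (a + b) := by
    rw [intervalIntegral.integral_sub ((hint a (by omega)).add (hint b (by omega)))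
      (hint (a + b) (by omega)), intervalIntegral.integral_add (hint a (by omega))
      (hint b (by omega)), hlam a (by omega), hlam b (by omega), hlam (a + b) (by omega)]
  have hφ_eq : ∀ θ,
      φ θ = β θ * (angularWeight a θ + angularWeight b θ - angularWeight (a + b) θ) :=
    fun θ => by ring
  have hφ_nonneg : ∀ θ ∈ Set.Icc (-R) R, 0 ≤ φ θ := by
    intro θ hθ
    rcases eq_or_ne θ 0 with rfl | hθ0
    · simp [φ, angularWeight_apply_zero (show 1 ≤ a by omega),
        angularWeight_apply_zero (show 1 ≤ b by omega),
        angularWeight_apply_zero (show 1 ≤ a + b by omega)]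
    · rw [hφ_eq]
      exact mul_nonneg (hβpos θ hθ hθ0).le (by nlinarith [angularWeight_add_le ha hb θ])
  have hφ_pos : ∀ θ ∈ Set.Ioo 0 R, 0 < φ θ := by
    intro θ ⟨hθ0, hθR⟩
    have hsin : 0 < sin θ := sin_pos_of_pos_of_lt_pi hθ0 (by linarith [pi_pos])
    have hcos : 0 < cos θ := cos_pos_of_mem_Ioo ⟨by linarith, by linarith⟩
    rw [hφ_eq]
    exact mul_pos (hβpos θ ⟨by linarith, hθR.le⟩ hθ0.ne')
      (by nlinarith [angularWeight_add_le ha hb θ, pow_pos (pow_pos hcos 2) 2,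
        pow_pos (pow_pos hsin 2) 2])
  have h0 : (0 : ℝ) ∈ Set.uIcc (-R) R := Set.mem_uIcc.mpr (Or.inl ⟨by linarith, hR.le⟩)
  have hφright : IntervalIntegrable φ volume 0 R :=
    hφint.mono_set (Set.uIcc_subset_uIcc h0 Set.right_mem_uIcc)
  have hleft : 0 ≤ ∫ θ in (-R)..0, φ θ :=
    intervalIntegral.integral_nonneg (by linarith) fun θ hθ =>
      hφ_nonneg θ ⟨hθ.1, by linarith [hθ.2]⟩
  have hright : 0 < ∫ θ in (0:ℝ)..R, φ θ :=
    intervalIntegral.intervalIntegral_pos_of_pos_on hφright hφ_pos hR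
  rw [← intervalIntegral.integral_add_adjacent_intervals
    (hφint.mono_set (Set.uIcc_subset_uIcc Set.left_mem_uIcc h0)) hφright] at hφ
  linarith

theorem List.apply_sum_lt_sum_map {M : Type*} [AddMonoid M] {p : M → Prop}
    (hp : ∀ a b, p a → p b → p (a + b)) {f : M → ℝ}
    (hf : ∀ a b, p a → p b → f (a + b) < f a + f b) :
    ∀ {L : List M}, 2 ≤ L.length → (∀ j ∈ L, p j) → f L.sum < (L.map f).sum
  | [], h, _ | [_], h, _ => by simp at h
  | [x, y], _, hL => by simpa using hf x y (hL x (by simp)) (hL y (by simp))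
  | x :: y :: z :: L, _, hL => by
    have hyzL : ∀ j ∈ y :: z :: L, p j := fun j hj => hL j (List.mem_cons_of_mem x hj)
    have hsum : p (y :: z :: L).sum := List.sum_induction_nonempty p hp (by simp) hyzL
    calc f (x :: y :: z :: L).sum = f (x + (y :: z :: L).sum) := by rw [List.sum_cons]
      _ < f x + f (y :: z :: L).sum := hf _ _ (hL x (by simp)) hsum
      _ < f x + ((y :: z :: L).map f).sum := by
          linarith [List.apply_sum_lt_sum_map hp hf (L := y :: z :: L) (by simp) hyzL]
      _ = ((x :: y :: z :: L).map f).sum := by simp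

lemma eq_mul_exp_of_hasDerivWithinAt {h h' : ℝ → ℝ} {μ : ℝ}
    (hderiv : ∀ t, 0 ≤ t → HasDerivWithinAt h (h' t) (Set.Ici 0) t)
    (hode : ∀ t, 0 ≤ t → h' t = -μ * h t) {t : ℝ} (ht : 0 ≤ t) :
    h t = h 0 * exp (-μ * t) := by
  set g : ℝ → ℝ := fun u => exp (μ * u) * h u
  have hg : ∀ u, 0 ≤ u → HasDerivWithinAt g 0 (Set.Ici 0) u := by
    intro u hu
    have := (((hasDerivAt_id u).const_mul μ).exp.hasDerivWithinAt).mul (hderiv u hu)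
    exact this.congr_deriv (by rw [hode u hu, id, mul_one]; ring)
  have hconst : g t = g 0 :=
    constant_of_has_deriv_right_zero
      (fun u hu => ((hg u hu.1).continuousWithinAt).mono fun v hv => hv.1)
      (fun u hu => (hg u hu.1).mono (Set.Ici_subset_Ici.mpr hu.1)) t ⟨ht, le_rfl⟩
  have hexp : exp (-μ * t) * exp (μ * t) = 1 := by rw [← exp_add]; simp
  calc h t = exp (-μ * t) * g t := by simp only [g]; rw [← mul_assoc, hexp, one_mul]
    _ = h 0 * exp (-μ * t) := by rw [hconst]; simp [g, mul_comm]

def IsExpSum (lam : ℕ → ℝ) (P : List ℕ → Prop) (f : ℝ → ℝ) : Prop :=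
  ∃ (T : Finset (List ℕ)) (γ : List ℕ → ℝ), (∀ L ∈ T, P L) ∧
    ∀ t, 0 ≤ t → f t = ∑ L ∈ T, γ L * exp (-(L.map lam).sum * t)

namespace IsExpSum

variable {lam : ℕ → ℝ} {P Q R : List ℕ → Prop} {f f' g : ℝ → ℝ}

lemma of_sum {ι : Type*} (S : Finset ι) (d : ι → ℝ) (ℓ : ι → List ℕ) (hS : ∀ i ∈ S, P (ℓ i))
    (hf : ∀ t, 0 ≤ t → f t = ∑ i ∈ S, d i * exp (-((ℓ i).map lam).sum * t)) :
    IsExpSum lam P f := by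
  classical
  refine ⟨S.image ℓ, fun L => ∑ i ∈ S with ℓ i = L, d i, by simpa using hS, fun t ht => ?_⟩
  rw [hf t ht, Finset.sum_image']
  intro i _
  rw [Finset.sum_mul]
  exact Finset.sum_congr rfl fun j hj => by rw [(Finset.mem_filter.mp hj).2]

lemma zero : IsExpSum lam P 0 := ⟨∅, 0, by simp, by simp⟩

lemma congr (hf : IsExpSum lam P f) (hfg : ∀ t, 0 ≤ t → f t = g t) : IsExpSum lam P g := by
  obtain ⟨T, γ, hT, hf⟩ := hf
  exact ⟨T, γ, hT, fun t ht => (hfg t ht).symm.trans (hf t ht)⟩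

lemma mono (hf : IsExpSum lam P f) (hPQ : ∀ L, P L → Q L) : IsExpSum lam Q f := by
  obtain ⟨T, γ, hT, hf⟩ := hf
  exact ⟨T, γ, fun L hL => hPQ L (hT L hL), hf⟩

lemma exp_singleton (C : ℝ) (n : ℕ) : IsExpSum lam (· = [n]) (fun t => C * exp (-lam n * t)) :=
  ⟨{[n]}, fun _ => C, by simp, by simp⟩

lemma const_mul (C : ℝ) (hf : IsExpSum lam P f) : IsExpSum lam P (fun t => C * f t) := by
  obtain ⟨T, γ, hT, hf⟩ := hf
  refine ⟨T, fun L => C * γ L, hT, fun t ht => ?_⟩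
  simp only [hf t ht, Finset.mul_sum, mul_assoc]

lemma add (hf : IsExpSum lam P f) (hg : IsExpSum lam P g) : IsExpSum lam P (f + g) := by
  obtain ⟨T₁, γ₁, hT₁, hf⟩ := hf
  obtain ⟨T₂, γ₂, hT₂, hg⟩ := hg
  refine of_sum (T₁.disjSum T₂) (Sum.elim γ₁ γ₂) (Sum.elim id id) ?_ fun t ht => ?_
  · simpa using ⟨hT₁, hT₂⟩
  · simp [Finset.sum_disjSum, hf t ht, hg t ht]

lemma mul (hf : IsExpSum lam P f) (hg : IsExpSum lam Q g)
    (hPQ : ∀ L₁ L₂, P L₁ → Q L₂ → R (L₁ ++ L₂)) : IsExpSum lam R (f * g) := by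
  obtain ⟨T₁, γ₁, hT₁, hf⟩ := hf
  obtain ⟨T₂, γ₂, hT₂, hg⟩ := hg
  refine of_sum (T₁ ×ˢ T₂) (fun L => γ₁ L.1 * γ₂ L.2) (fun L => L.1 ++ L.2)
    (fun L hL => hPQ _ _ (hT₁ _ (Finset.mem_product.mp hL).1)
      (hT₂ _ (Finset.mem_product.mp hL).2))
    fun t ht => ?_
  rw [Pi.mul_apply, hf t ht, hg t ht, Finset.sum_mul_sum, Finset.sum_product]
  refine Finset.sum_congr rfl fun L₁ _ => Finset.sum_congr rfl fun L₂ _ => ?_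
  rw [List.map_append, List.sum_append, neg_add, add_mul, exp_add]
  ring

lemma finset_sum {ι : Type*} {S : Finset ι} {F : ι → ℝ → ℝ}
    (hF : ∀ i ∈ S, IsExpSum lam P (F i)) : IsExpSum lam P (fun t => ∑ i ∈ S, F i t) := by
  have := Finset.sum_induction F (IsExpSum lam P) (fun _ _ => add) zero hF
  exact this.congr fun t _ => Finset.sum_apply t S F

lemma of_hasDerivWithinAt_add_mul {n : ℕ} (hg : IsExpSum lam P g)
    (hres : ∀ L, P L → (L.map lam).sum ≠ lam n)
    (hderiv : ∀ t, 0 ≤ t → HasDerivWithinAt f (f' t) (Set.Ici 0) t)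
    (hode : ∀ t, 0 ≤ t → f' t + lam n * f t = g t) :
    IsExpSum lam (fun L => L = [n] ∨ P L) f := by
  obtain ⟨T, γ, hT, hg⟩ := hg
  set r : List ℕ → ℝ := fun L => (L.map lam).sum
  -- the non-resonant particular solution
  set p : ℝ → ℝ := fun t => ∑ L ∈ T, γ L / (lam n - r L) * exp (-r L * t)
  set p' : ℝ → ℝ := fun t => ∑ L ∈ T, γ L / (lam n - r L) * (-r L * exp (-r L * t))
  have hp : ∀ t, HasDerivAt p (p' t) t := fun t =>
    HasDerivAt.fun_sum fun L _ => by
      simpa [mul_comm] using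
        (((hasDerivAt_id t).const_mul (-r L)).exp).const_mul (γ L / (lam n - r L))
  have hp_ode : ∀ t, 0 ≤ t → p' t + lam n * p t = g t := by
    intro t ht
    rw [hg t ht, Finset.mul_sum, ← Finset.sum_add_distrib]
    refine Finset.sum_congr rfl fun L hL => ?_
    have hne : lam n - r L ≠ 0 := sub_ne_zero.mpr (hres L (hT L hL)).symm
    simp only [r] at hne ⊢
    field_simp
    ring
  have hsol : ∀ t, 0 ≤ t → f t - p t = (f 0 - p 0) * exp (-lam n * t) :=
    fun t ht => eq_mul_exp_of_hasDerivWithinAt (h := f - p)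
      (fun t ht => (hderiv t ht).sub (hp t).hasDerivWithinAt)
      (fun t ht => by simp only [Pi.sub_apply]; linarith [hode t ht, hp_ode t ht]) ht
  have hpP : IsExpSum lam P p := ⟨T, fun L => γ L / (lam n - r L), hT, fun _ _ => rfl⟩
  refine (((exp_singleton (f 0 - p 0) n).mono fun L => Or.inl).add
    (hpP.mono fun L => Or.inr)).congr fun t ht => ?_
  simp only [Pi.add_apply]
  linarith [hsol t ht]

end IsExpSum

theorem isExpSum_of_triangular_system {lam : ℕ → ℝ}
    (hlam : ∀ a b, 2 ≤ a → 2 ≤ b → lam (a + b) < lam a + lam b)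
    (cc : ℕ → ℕ → ℝ) (b b' : ℕ → ℝ → ℝ)
    (hderiv : ∀ n t, 0 ≤ t → HasDerivWithinAt (b n) (b' n t) (Set.Ici 0) t)
    (hb1 : ∀ t, 0 ≤ t → b 1 t = 0)
    (hode : ∀ n, 2 ≤ n → ∀ t, 0 ≤ t →
      b' n t + lam n * b n t =
        ∑ k ∈ Finset.Icc 1 (n - 1), cc k (n - k) * b k t * b (n - k) t) :
    ∀ n, 1 ≤ n → IsExpSum lam (fun L => (∀ j ∈ L, 2 ≤ j) ∧ L.sum = n) (b n) := by
  intro n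
  induction n using Nat.strong_induction_on with
  | _ n ih =>
  intro hn
  rcases hn.eq_or_lt with rfl | hn
  · exact IsExpSum.zero.congr fun t ht => (hb1 t ht).symm
  have hrhs : IsExpSum lam (fun L => 2 ≤ L.length ∧ (∀ j ∈ L, 2 ≤ j) ∧ L.sum = n)
      (fun t => ∑ k ∈ Finset.Icc 1 (n - 1), cc k (n - k) * b k t * b (n - k) t) := by
    refine IsExpSum.finset_sum fun k hk => ?_
    obtain ⟨hk1, hkn⟩ := Finset.mem_Icc.mp hk
    refine ((ih k (by omega) hk1).const_mul (cc k (n - k))).mul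
      (ih (n - k) (by omega) (by omega)) fun L₁ L₂ ⟨hL₁, hs₁⟩ ⟨hL₂, hs₂⟩ => ⟨?_, ?_, ?_⟩
    · have h₁ : 0 < L₁.length :=
        List.length_pos_iff.mpr (by rintro rfl; rw [List.sum_nil] at hs₁; omega)
      have h₂ : 0 < L₂.length :=
        List.length_pos_iff.mpr (by rintro rfl; rw [List.sum_nil] at hs₂; omega)
      rw [List.length_append]
      omega
    · simpa [or_imp, forall_and] using ⟨hL₁, hL₂⟩
    · rw [List.sum_append, hs₁, hs₂]; omega
  have hres : ∀ L : List ℕ, 2 ≤ L.length ∧ (∀ j ∈ L, 2 ≤ j) ∧ L.sum = n →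
      (L.map lam).sum ≠ lam n := fun L ⟨hlen, hL, hs⟩ =>
    hs ▸ (List.apply_sum_lt_sum_map (fun _ _ _ _ => by omega) hlam hlen hL).ne'
  refine (hrhs.of_hasDerivWithinAt_add_mul hres (hderiv n) (hode n hn)).mono ?_
  rintro L (rfl | ⟨_, hL⟩)
  · simp only [List.mem_singleton, forall_eq, List.sum_singleton, and_true]
    exact hn
  · exact hL

theorem coefficients_as_sums_of_exponentials_general
    (s : ℝ) (hs1 : s < 1) (β : ℝ → ℝ) (hβmeas : Measurable β)
    (c : ℝ) (hc : 0 < c)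
    (hβbound : ∀ θ ∈ Set.Icc (-(π/4)) (π/4), θ ≠ 0 →
      c * |θ| ^ (-(1:ℝ) - 2*s) ≤ β θ ∧ β θ ≤ c⁻¹ * |θ| ^ (-(1:ℝ) - 2*s))
    (lam : ℕ → ℝ)
    (hlam : ∀ n : ℕ, 1 ≤ n →
      lam n = ∫ θ in (-(π/4))..(π/4),
        β θ * (1 - Real.cos θ ^ (2*n) - Real.sin θ ^ (2*n)))
    (cc : ℕ → ℕ → ℝ)
    (b b' : ℕ → ℝ → ℝ)
    (hderiv : ∀ n : ℕ, ∀ t : ℝ, 0 ≤ t → HasDerivWithinAt (b n) (b' n t) (Set.Ici 0) t)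
    (hb1 : ∀ t : ℝ, b 1 t = 0)
    (hode : ∀ n : ℕ, 2 ≤ n → ∀ t : ℝ, 0 ≤ t →
      b' n t + lam n * b n t =
        ∑ k ∈ Finset.Icc 1 (n-1), cc k (n-k) * b k t * b (n-k) t) :
    ∀ n : ℕ, 2 ≤ n →
      ∃ (T : Finset (List ℕ)) (γ : List ℕ → ℝ),
        (∀ L ∈ T, L ≠ [] ∧ L.length ≤ n ∧ (∀ j ∈ L, 2 ≤ j) ∧ L.sum = n) ∧
        ∀ t : ℝ, 0 ≤ t →
          b n t = ∑ L ∈ T, γ L * Real.exp (-((L.map lam).sum) * t) := by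
  have hβpos : ∀ θ ∈ Set.Icc (-(π/4)) (π/4), θ ≠ 0 → 0 < β θ := fun θ hθ hθ0 =>
    lt_of_lt_of_le (by have := abs_pos.mpr hθ0; positivity) (hβbound θ hθ hθ0).1
  have hint : ∀ m, 1 ≤ m →
      IntervalIntegrable (fun θ => β θ * angularWeight m θ) volume (-(π/4)) (π/4) :=
    fun m => intervalIntegrable_mul_angularWeight hβmeas (by linarith : -3 < -(1:ℝ) - 2*s)
      (fun θ hθ hθ0 => by
        rw [Set.uIcc_of_le (by linarith [pi_pos])] at hθ
        exact ⟨(hβpos θ hθ hθ0).le, (hβbound θ hθ hθ0).2⟩)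
  have hsub : ∀ a b, 2 ≤ a → 2 ≤ b → lam (a + b) < lam a + lam b := fun a b =>
    integral_mul_angularWeight_add_lt (by positivity) (by linarith [pi_pos]) hβpos hint hlam
  intro n hn
  obtain ⟨T, γ, hT, hb⟩ :=
    isExpSum_of_triangular_system hsub cc b b' hderiv (fun t _ => hb1 t) hode n (by omega)
  refine ⟨T, γ, fun L hL => ?_, hb⟩
  obtain ⟨hparts, hsum⟩ := hT L hL
  refine ⟨?_, hsum ▸ L.length_le_sum_of_one_le fun j hj => one_le_two.trans (hparts j hj),
    hparts, hsum⟩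
  rintro rfl
  rw [List.sum_nil] at hsum
  omega

theorem coefficients_as_sums_of_exponentials
    (s : ℝ) (hs0 : 0 < s) (hs1 : s < 1) (β : ℝ → ℝ) (hβmeas : Measurable β)
    (c : ℝ) (hc : 0 < c)
    (hβbound : ∀ θ ∈ Set.Icc (-(π/4)) (π/4), θ ≠ 0 →
      c * |θ| ^ (-(1:ℝ) - 2*s) ≤ β θ ∧ β θ ≤ c⁻¹ * |θ| ^ (-(1:ℝ) - 2*s))
    (lam : ℕ → ℝ)
    (hlam : ∀ n : ℕ, 1 ≤ n →
      lam n = ∫ θ in (-(π/4))..(π/4),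
        β θ * (1 - Real.cos θ ^ (2*n) - Real.sin θ ^ (2*n)))
    (cc : ℕ → ℕ → ℝ)
    (hcc : ∀ k l : ℕ, 1 ≤ k → 1 ≤ l →
      cc k l = Real.sqrt ((2*(k:ℝ) + 2*(l:ℝ) + 1) / ((2*(k:ℝ) + 1) * (2*(l:ℝ) + 1))) *
        Real.sqrt (((2*k + 2*l).choose (2*k) : ℝ)) *
        ∫ θ in (-(π/4))..(π/4), β θ * Real.sin θ ^ (2*k) * Real.cos θ ^ (2*l))
    (b b' : ℕ → ℝ → ℝ)
    (hderiv : ∀ n : ℕ, ∀ t : ℝ, 0 ≤ t → HasDerivWithinAt (b n) (b' n t) (Set.Ici 0) t)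
    (hb0 : ∀ t : ℝ, b 0 t = 0) (hb1 : ∀ t : ℝ, b 1 t = 0)
    (hode : ∀ n : ℕ, 2 ≤ n → ∀ t : ℝ, 0 ≤ t →
      b' n t + lam n * b n t =
        ∑ k ∈ Finset.Icc 1 (n-1), cc k (n-k) * b k t * b (n-k) t) :
    ∀ n : ℕ, 2 ≤ n →
      ∃ (T : Finset (List ℕ)) (γ : List ℕ → ℝ),
        (∀ L ∈ T, L ≠ [] ∧ L.length ≤ n ∧ (∀ j ∈ L, 2 ≤ j) ∧ L.sum = n) ∧
        ∀ t : ℝ, 0 ≤ t →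
          b n t = ∑ L ∈ T, γ L * Real.exp (-((L.map lam).sum) * t) :=
  coefficients_as_sums_of_exponentials_general s hs1 β hβmeas c hc hβbound lam hlam cc b b' hderiv
    hb1 hode
end
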